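/- Let R = K[x_1][x_2;θ_2,δ_2]···[x_N;θ_N,δ_N] be a CGL extension whose presentation has a D-form R_D = D⟨x_1,…,x_N⟩, for a unital subring D ⊆ K, containing the homogeneous prime elements y_1,…,y_N. Then: (a) for each k ∈ [1,N], the element y_k is normal in (R_D)_k := D⟨x_1,…,x_k⟩ (i.e., y_k(R_D)_k = (R_D)_k y_k); and (b) for any subset I ⊆ [1,N], the multiplicative set generated by D^× ∪ {y_i : i ∈ I} is a denominator (Ore) set in R_D. -/

import Mathlib

open scoped Classical

namespace GYint

/-! ## Subalgebras generated by subsets of the generators -/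

variable (K : Type) [Field K] {R : Type} [Ring R] [Algebra K R]

/-- The `K`-subalgebra of `R` generated by the generators `x i` with `P i`. -/
def xAdj {N : ℕ} (x : Fin N → R) (P : Fin N → Prop) : Subalgebra K R :=
  Algebra.adjoin K {r : R | ∃ i : Fin N, P i ∧ r = x i}

/-- `R_k` : the subalgebra generated by the first `k` generators (0-indexed: indices `< k`). -/
def Rk {N : ℕ} (x : Fin N → R) (k : ℕ) : Subalgebra K R :=
  xAdj K x (fun i => (i : ℕ) < k)

/-- The interval subalgebra `R_{[a,b]}` generated by `x_a, …, x_b` (0-indexed, inclusive). -/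
def Rint {N : ℕ} (x : Fin N → R) (a b : ℕ) : Subalgebra K R :=
  xAdj K x (fun i => a ≤ (i : ℕ) ∧ (i : ℕ) ≤ b)

variable {K}

/-- The ordered monomial `x^f = x_1^{f 1} ⋯ x_N^{f N}`. -/
def oMono {N : ℕ} (x : Fin N → R) (f : Fin N → ℕ) : R :=
  ((List.finRange N).map (fun i => x i ^ f i)).prod

/-- Evaluation at `h ∈ (Kˣ)^r` of the character with exponent vector `m`. -/
def charEval {r : ℕ} (h : Fin r → Kˣ) (m : Fin r → ℤ) : Kˣ :=
  ∏ i, h i ^ m i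

/-- The multiplicative bicharacter `Ω_t` on `ℤ^N` associated to a multiplicatively
skew-symmetric matrix `t`, with `Ω_t(e_j, e_k) = t j k`. -/
def omegaU {N : ℕ} (t : Fin N → Fin N → Kˣ) (f g : Fin N → ℤ) : Kˣ :=
  ∏ p : Fin N × Fin N, t p.1 p.2 ^ (f p.1 * g p.2)

/-! ## CGL extensions (quantum nilpotent algebras) -/

/-- An iterated skew polynomial (Ore) presentation
`R = K[x_1][x_2; θ_2, δ_2] ⋯ [x_N; θ_N, δ_N]` of a `K`-algebra `R`, together with the
rational torus action data making it a CGL extension (quantum nilpotent algebra).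
Here `θ k` and `δ k` are recorded as maps `R → R` whose restrictions to
`R_{k-1} = K⟨x_1,…,x_{k-1}⟩` are, respectively, a `K`-algebra automorphism (with
inverse the restriction of `θinv k`) and a `K`-linear locally nilpotent
`θ_k`-derivation; `x k * a = θ k a * x k + δ k a` for `a ∈ R_{k-1}`; the ordered
monomials in the generators form a `K`-basis of `R` (so each `R_k` is a free left
`R_{k-1}`-module with basis the powers of `x_k`); each `x k` is an eigenvector of the
torus `H = (Kˣ)^rk` with character `chi k`; `θ k` is implemented by the torus element
`hElt k`, whose eigenvalue `lam k` on `x k` is not a root of unity, and whose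
eigenvalue on `x j` (`j < k`) is `lamM k j`, the multiplicatively skew-symmetric
`λ`-matrix of the presentation. -/
structure CGLExt (K : Type) [Field K] (R : Type) [Ring R] [Algebra K R] (N : ℕ) where
  x : Fin N → R
  pbw : Module.Basis (Fin N → ℕ) K R
  pbw_eq : ∀ f, pbw f = oMono x f
  rk : ℕ
  act : (Fin rk → Kˣ) →* (R ≃ₐ[K] R)
  chi : Fin N → Fin rk → ℤ
  eigen : ∀ (h : Fin rk → Kˣ) (k : Fin N), act h (x k) = (charEval h (chi k) : K) • x k
  θ : Fin N → R → R
  θinv : Fin N → R → R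
  δ : Fin N → R → R
  θ_mem : ∀ k : Fin N, ∀ a ∈ Rk K x (k : ℕ), θ k a ∈ Rk K x (k : ℕ)
  θinv_mem : ∀ k : Fin N, ∀ a ∈ Rk K x (k : ℕ), θinv k a ∈ Rk K x (k : ℕ)
  δ_mem : ∀ k : Fin N, ∀ a ∈ Rk K x (k : ℕ), δ k a ∈ Rk K x (k : ℕ)
  θ_linear : ∀ (k : Fin N) (s : K), ∀ a ∈ Rk K x (k : ℕ), ∀ b ∈ Rk K x (k : ℕ),
    θ k (s • a + b) = s • θ k a + θ k b
  θ_mul : ∀ k : Fin N, ∀ a ∈ Rk K x (k : ℕ), ∀ b ∈ Rk K x (k : ℕ), θ k (a * b) = θ k a * θ k b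
  θ_one : ∀ k : Fin N, θ k 1 = 1
  θ_left_inv : ∀ k : Fin N, ∀ a ∈ Rk K x (k : ℕ), θinv k (θ k a) = a
  θ_right_inv : ∀ k : Fin N, ∀ a ∈ Rk K x (k : ℕ), θ k (θinv k a) = a
  δ_linear : ∀ (k : Fin N) (s : K), ∀ a ∈ Rk K x (k : ℕ), ∀ b ∈ Rk K x (k : ℕ),
    δ k (s • a + b) = s • δ k a + δ k b
  δ_tw : ∀ k : Fin N, ∀ a ∈ Rk K x (k : ℕ), ∀ b ∈ Rk K x (k : ℕ),
    δ k (a * b) = δ k a * b + θ k a * δ k b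
  ore : ∀ k : Fin N, ∀ a ∈ Rk K x (k : ℕ), x k * a = θ k a * x k + δ k a
  δ_nil : ∀ k : Fin N, ∀ a ∈ Rk K x (k : ℕ), ∃ n : ℕ, (δ k)^[n] a = 0
  hElt : Fin N → Fin rk → Kˣ
  lam : Fin N → Kˣ
  hElt_theta : ∀ k : Fin N, ∀ a ∈ Rk K x (k : ℕ), act (hElt k) a = θ k a
  hElt_lam : ∀ k : Fin N, act (hElt k) (x k) = (lam k : K) • x k
  lam_nru : ∀ (k : Fin N) (n : ℕ), 0 < n → lam k ^ n ≠ 1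
  lamM : Fin N → Fin N → Kˣ
  lamM_spec : ∀ k j : Fin N, (j : ℕ) < (k : ℕ) → act (hElt k) (x j) = (lamM k j : K) • x j
  lamM_diag : ∀ k, lamM k k = 1
  lamM_skew : ∀ k j, lamM j k = (lamM k j)⁻¹

/-- A symmetric CGL extension: additionally `δ_k (x_j) ∈ K⟨x_{j+1},…,x_{k-1}⟩` for all
`j < k` (via the Ore relation, `δ_k(x_j) = x_k x_j - λ_{kj} x_j x_k`), and for each `j`
there is an element `h_j^*` of the torus acting on `x_k` by `λ_{kj}⁻¹` for `k > j` and
on `x_j` by an eigenvalue `λ_j^*` which is not a root of unity. -/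
structure SymCGLExt (K : Type) [Field K] (R : Type) [Ring R] [Algebra K R] (N : ℕ)
    extends CGLExt K R N where
  sym_delta : ∀ j k : Fin N, (j : ℕ) < (k : ℕ) →
    x k * x j - (lamM k j : K) • (x j * x k) ∈ Rint K x ((j : ℕ) + 1) ((k : ℕ) - 1)
  hStar : Fin N → Fin rk → Kˣ
  lamStar : Fin N → Kˣ
  hStar_spec : ∀ j k : Fin N, (j : ℕ) < (k : ℕ) →
    act (hStar j) (x k) = (((lamM k j)⁻¹ : Kˣ) : K) • x k
  hStar_lam : ∀ j : Fin N, act (hStar j) (x j) = (lamStar j : K) • x j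
  lamStar_nru : ∀ (j : Fin N) (n : ℕ), 0 < n → lamStar j ^ n ≠ 1

/-- A homogeneous element (`H`-eigenvector with an integral character; `0` is allowed). -/
def IsHomog {N : ℕ} (E : CGLExt K R N) (u : R) : Prop :=
  ∃ m : Fin E.rk → ℤ, ∀ h : Fin E.rk → Kˣ, E.act h u = (charEval h m : K) • u

/-- `p` is a normal element of the subalgebra `S` : `p S = S p`. -/
def IsNormalIn (S : Subalgebra K R) (p : R) : Prop :=
  (∀ a ∈ S, ∃ b ∈ S, p * a = b * p) ∧ (∀ a ∈ S, ∃ b ∈ S, a * p = p * b)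

/-- `p` is a prime element of the subalgebra `S`: a nonzero normal element of `S`
such that `S/(p)` is a domain. -/
def IsPrimeElemIn (S : Subalgebra K R) (p : R) : Prop :=
  p ≠ 0 ∧ p ∈ S ∧ IsNormalIn S p ∧
  ∀ a b : R, a ∈ S → b ∈ S → (∃ c ∈ S, a * b = p * c) →
    (∃ c ∈ S, a = p * c) ∨ (∃ c ∈ S, b = p * c)

/-! ## Predecessor and successor functions -/

/-- The predecessor function `p(k)` of the level sets of `η` (`⊥` playing the role of `-∞`). -/
noncomputable def predIdx {N : ℕ} {α : Type} (η : Fin N → α) (k : Fin N) : WithBot (Fin N) :=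
  (Finset.univ.filter (fun j : Fin N => (j : ℕ) < (k : ℕ) ∧ η j = η k)).max

/-- The successor function `s(k)` of the level sets of `η` (`⊤` playing the role of `+∞`). -/
noncomputable def succIdx {N : ℕ} {α : Type} (η : Fin N → α) (k : Fin N) : WithTop (Fin N) :=
  (Finset.univ.filter (fun j : Fin N => (k : ℕ) < (j : ℕ) ∧ η j = η k)).min

/-- Iterated successor `s^m(k)`. -/
noncomputable def succIter {N : ℕ} {α : Type} (η : Fin N → α) : ℕ → Fin N → WithTop (Fin N)
  | 0, k => (k : WithTop (Fin N))
  | n + 1, k => WithTop.recTopCoe ⊤ (fun j => succIdx η j) (succIter η n k)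

/-- Iterated predecessor `p^m(k)`. -/
noncomputable def predIter {N : ℕ} {α : Type} (η : Fin N → α) : ℕ → Fin N → WithBot (Fin N)
  | 0, k => (k : WithBot (Fin N))
  | n + 1, k => WithBot.recBotCoe ⊥ (fun j => predIdx η j) (predIter η n k)

/-! ## The sequence of homogeneous prime elements, [GY1, Theorem 4.3] -/

/-- The data of [GY1, Theorem 4.3] for a CGL extension `E`: a function `η : [1,N] → ℤ`,
elements `c_k ∈ R_{k-1}`, and the sequence `y_1, …, y_N` of homogeneous elements defined
by the recursion `y_k = y_{p(k)} x_k - c_k` (resp. `y_k = x_k` when `p(k) = -∞`) such that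
for every `k`, `{y_j : j ≤ k, s(j) > k}` is a list of the homogeneous prime elements of
`R_k` up to scalar multiples. -/
structure YSystem {N : ℕ} (E : CGLExt K R N) where
  η : Fin N → ℤ
  y : Fin N → R
  c : Fin N → R
  c_mem : ∀ k : Fin N, c k ∈ Rk K E.x (k : ℕ)
  y_rec : ∀ k j : Fin N, predIdx η k = (j : WithBot (Fin N)) → y k = y j * E.x k - c k
  y_base : ∀ k : Fin N, predIdx η k = ⊥ → y k = E.x k
  y_homog : ∀ k : Fin N, IsHomog E (y k)
  y_prime : ∀ k j : Fin N, (j : ℕ) ≤ (k : ℕ) →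
    (∀ l : Fin N, succIdx η j = (l : WithTop (Fin N)) → (k : ℕ) < (l : ℕ)) →
    IsPrimeElemIn (Rk K E.x ((k : ℕ) + 1)) (y j)
  y_complete : ∀ (k : Fin N) (u : R), IsHomog E u →
    IsPrimeElemIn (Rk K E.x ((k : ℕ) + 1)) u →
    ∃ j : Fin N, (j : ℕ) ≤ (k : ℕ) ∧
      (∀ l : Fin N, succIdx η j = (l : WithTop (Fin N)) → (k : ℕ) < (l : ℕ)) ∧
      ∃ t : Kˣ, u = (t : K) • y j

/-! ## Leading terms -/

/-- The reverse lexicographic order `f ≺ g` on exponent vectors. -/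
def revLexLt {N : ℕ} (f g : Fin N → ℕ) : Prop :=
  ∃ n : Fin N, f n < g n ∧ ∀ m : Fin N, n < m → f m = g m

/-- `b` has leading term `t x^f` with respect to the PBW basis and `≺`. -/
def IsLeadingTerm {N : ℕ} (E : CGLExt K R N) (b : R) (t : K) (f : Fin N → ℕ) : Prop :=
  t ≠ 0 ∧ E.pbw.repr b f = t ∧
    ∀ g : Fin N → ℕ, E.pbw.repr b g ≠ 0 → g = f ∨ revLexLt g f

/-! ## Interval prime elements of symmetric CGL extensions -/

/-- The `{0,1}`-vector (as natural numbers) supported on the `η`-chain from `a` to `b`,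
i.e. on `{l : a ≤ l ≤ b, η l = η a}`; for `b = s^m(a)` this is the exponent vector of
`x_a x_{s(a)} ⋯ x_{s^m(a)}`, i.e. `e_{[a,b]}`. -/
noncomputable def chainIndN {N : ℕ} {α : Type} (η : Fin N → α) (a b : Fin N) : Fin N → ℕ :=
  fun l => if a ≤ l ∧ l ≤ b ∧ η l = η a then 1 else 0

/-- Integer version of `chainIndN`, the vector `e_{[a,b]} ∈ ℤ^N`. -/
noncomputable def chainIndZ {N : ℕ} {α : Type} (η : Fin N → α) (a b : Fin N) : Fin N → ℤ :=
  fun l => if a ≤ l ∧ l ≤ b ∧ η l = η a then 1 else 0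

/-- The standard basis vector `e_i ∈ ℤ^N`. -/
def eVecZ {N : ℕ} (i : Fin N) : Fin N → ℤ := fun l => if l = i then 1 else 0

/-- The vector `ē_j = e_j + e_{p(j)} + ⋯ + e_{p^{O_-(j)}(j)} ∈ ℤ^N`. -/
noncomputable def ebarZ {N : ℕ} {α : Type} (η : Fin N → α) (j : Fin N) : Fin N → ℤ :=
  fun l => if l ≤ j ∧ η l = η j then 1 else 0

/-- The interval prime elements `y_{[i, s^m(i)]}` of a symmetric CGL extension
([GYbig, Theorem 5.1]): for all `i` and `m ≥ 0` with `s^m(i) ∈ [1,N]`, the element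
`yI i (s^m(i))` is the unique homogeneous prime element of the interval subalgebra
`R_{[i, s^m(i)]}` with leading term `x_i x_{s(i)} ⋯ x_{s^m(i)}`. -/
structure IntervalYSystem {N : ℕ} (E : SymCGLExt K R N) (Y : YSystem E.toCGLExt) where
  yI : Fin N → Fin N → R
  homog : ∀ i k : Fin N, IsHomog E.toCGLExt (yI i k)
  prime : ∀ (i : Fin N) (m : ℕ) (k : Fin N), succIter Y.η m i = (k : WithTop (Fin N)) →
    IsPrimeElemIn (Rint K E.x (i : ℕ) (k : ℕ)) (yI i k)
  lt : ∀ (i : Fin N) (m : ℕ) (k : Fin N), succIter Y.η m i = (k : WithTop (Fin N)) →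
    IsLeadingTerm E.toCGLExt (yI i k) 1 (chainIndN Y.η i k)

/-- `y_{[j,k]}` extended by the convention `y_{[s(i), i]} = 1`. -/
def yIext {N : ℕ} (E : SymCGLExt K R N) (Y : YSystem E.toCGLExt)
    (YI : IntervalYSystem E Y) (j k : Fin N) : R :=
  if (k : ℕ) < (j : ℕ) then 1 else YI.yI j k

/-- The normal elements `u_{[i,s^m(i)]}` of [GYbig, Corollary 5.11]: here `j = s(i)`,
`k' = s^{m-1}(i)`, `k = s^m(i)` and
`u = y_{[i,k']} y_{[j,k]} - Ω_λ(e_i, e_{[j,k']}) y_{[j,k']} y_{[i,k]}`. -/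
noncomputable def uElem {N : ℕ} (E : SymCGLExt K R N) (Y : YSystem E.toCGLExt)
    (YI : IntervalYSystem E Y) (i j k' k : Fin N) : R :=
  YI.yI i k' * YI.yI j k -
    (omegaU E.lamM (eVecZ i) (chainIndZ Y.η j k') : K) • (yIext E Y YI j k' * YI.yI i k)

/-! ## Conditions (A) and (B) and the normalization condition -/

/-- Condition (A): a choice of square roots `ν_{kl} = √λ_{kl}` in `K` such that the
subgroup of `Kˣ` they generate contains no elements of order 2. -/
structure CondA {N : ℕ} (E : CGLExt K R N) where
  ν : Fin N → Fin N → Kˣ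
  sq : ∀ k j : Fin N, (j : ℕ) < (k : ℕ) → ν k j ^ 2 = E.lamM k j
  diag : ∀ k, ν k k = 1
  skew : ∀ k j, ν j k = (ν k j)⁻¹
  no_order_two : ∀ t ∈ Subgroup.closure {u : Kˣ | ∃ k j : Fin N, u = ν k j},
    t ^ 2 = 1 → t = 1

/-- Condition (B): positive integers `d_n`, `n ∈ η([1,N])`, with
`λ_k^{d_{η(l)}} = λ_l^{d_{η(k)}}` whenever `p(k), p(l) ≠ -∞`. -/
def CondB {N : ℕ} (E : CGLExt K R N) (η : Fin N → ℤ) (d : ℤ → ℕ) : Prop :=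
  (∀ k : Fin N, 0 < d (η k)) ∧
  ∀ k l : Fin N, predIdx η k ≠ ⊥ → predIdx η l ≠ ⊥ →
    E.lam k ^ d (η l) = E.lam l ^ d (η k)

/-- The symmetrization scalar `S_ν(f) = ∏_{j<k} ν_{jk}^{-f_j f_k}`. -/
def Snu {N : ℕ} (ν : Fin N → Fin N → Kˣ) (f : Fin N → ℤ) : Kˣ :=
  ∏ p : Fin N × Fin N,
    if (p.1 : ℕ) < (p.2 : ℕ) then ν p.1 p.2 ^ (-(f p.1 * f p.2)) else 1

/-- The normalization condition (6.6) of [GYbig]: the leading coefficient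
`π_{[i,s(i)]}` of `u_{[i,s(i)]}` equals `S_ν(-e_i + f_{[i,s(i)]})` for all `i` with
`s(i) ≠ +∞`, where `f_{[i,s(i)]}` is the exponent of the leading term of `u_{[i,s(i)]}`. -/
def NormCond {N : ℕ} (E : SymCGLExt K R N) (CA : CondA E.toCGLExt)
    (Y : YSystem E.toCGLExt) (YI : IntervalYSystem E Y) : Prop :=
  ∀ i j : Fin N, succIdx Y.η i = (j : WithTop (Fin N)) →
    ∃ f : Fin N → ℕ,
      IsLeadingTerm E.toCGLExt (uElem E Y YI i j i j)
        ((Snu CA.ν (fun l => (f l : ℤ) - eVecZ i l) : Kˣ) : K) f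

/-! ## D-forms -/

variable (K)

/-- `t` is a unit of the subring `D ⊆ K`. -/
def isUnitIn (D : Subring K) (t : K) : Prop := t ∈ D ∧ t ≠ 0 ∧ t⁻¹ ∈ D

/-- The `D`-subring of `R` generated by `D` and the generators `x i` with `P i`. -/
def Dspan (D : Subring K) {N : ℕ} (x : Fin N → R) (P : Fin N → Prop) : Subring R :=
  Subring.closure ((algebraMap K R) '' (D : Set K) ∪ {r : R | ∃ i : Fin N, P i ∧ r = x i})

/-- `(R_D)_k = D⟨x_1,…,x_k⟩` (0-indexed: indices `< k`). -/
def DRk (D : Subring K) {N : ℕ} (x : Fin N → R) (k : ℕ) : Subring R :=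
  Dspan K D x (fun i => (i : ℕ) < k)

/-- `R_D = D⟨x_1,…,x_N⟩`. -/
def DRfull (D : Subring K) {N : ℕ} (x : Fin N → R) : Subring R :=
  Dspan K D x (fun _ => True)

/-- `(R_D)_{[a,b]} = D⟨x_a,…,x_b⟩` (0-indexed, inclusive). -/
def DRint (D : Subring K) {N : ℕ} (x : Fin N → R) (a b : ℕ) : Subring R :=
  Dspan K D x (fun i => a ≤ (i : ℕ) ∧ (i : ℕ) ≤ b)

variable {K}

/-- `D⟨x_1,…,x_N⟩` is a `D`-form of the CGL presentation `E`, i.e. it is an iterated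
skew polynomial extension `D[x_1][x_2;θ_2,δ_2]⋯[x_N;θ_N,δ_N]`: each `θ_k` restricts
to an automorphism of `D⟨x_1,…,x_{k-1}⟩`, and each `δ_k` maps `D⟨x_1,…,x_{k-1}⟩`
into itself. -/
structure IsDForm (D : Subring K) {N : ℕ} (E : CGLExt K R N) : Prop where
  theta_mem : ∀ k : Fin N, ∀ a ∈ Rk K E.x (k : ℕ),
    a ∈ DRk K D E.x (k : ℕ) → E.θ k a ∈ DRk K D E.x (k : ℕ)
  thetainv_mem : ∀ k : Fin N, ∀ a ∈ Rk K E.x (k : ℕ),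
    a ∈ DRk K D E.x (k : ℕ) → E.θinv k a ∈ DRk K D E.x (k : ℕ)
  delta_mem : ∀ k : Fin N, ∀ a ∈ Rk K E.x (k : ℕ),
    a ∈ DRk K D E.x (k : ℕ) → E.δ k a ∈ DRk K D E.x (k : ℕ)

/-- `D ⊆ K` has `K` as its field of fractions. -/
def IsFractionFieldOf (D : Subring K) : Prop :=
  ∀ z : K, ∃ a ∈ D, ∃ b ∈ D, b ≠ 0 ∧ z = a / b

/-- `p` is a normal element of the subring `S` : `p S = S p`. -/
def IsNormalInSR (S : Subring R) (p : R) : Prop :=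
  (∀ a ∈ S, ∃ b ∈ S, p * a = b * p) ∧ (∀ a ∈ S, ∃ b ∈ S, a * p = p * b)

/-- `T` is a denominator (two-sided Ore) set in the subring `S` of the domain `R`. -/
def IsDenomSetIn (S : Subring R) (T : Submonoid R) : Prop :=
  ((T : Set R) ⊆ (S : Set R)) ∧ (0 : R) ∉ T ∧
  (∀ a ∈ S, ∀ s ∈ T, ∃ b ∈ S, ∃ t ∈ T, t * a = b * s) ∧
  (∀ a ∈ S, ∀ s ∈ T, ∃ b ∈ S, ∃ t ∈ T, a * t = s * b)

/-! ## The permutations `Ξ_N` and `Γ_N` -/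

/-- The set `Ξ_N ⊆ S_N` of permutations `σ` such that `σ([1,k])` is an interval for
all `k`. -/
def XiN {N : ℕ} : Set (Equiv.Perm (Fin N)) :=
  {σ | ∀ k a b c : Fin N, a ≤ k → b ≤ k → σ a ≤ c → c ≤ σ b → ∃ m : Fin N, m ≤ k ∧ σ m = c}

/-- The value at position `k` (0-indexed) of the permutation
`σ_{i,j} = [i+1, …, j, i, j+1, …, N, i-1, …, 1]` (here expressed 0-indexed). -/
def gammaVal (N i j : ℕ) (k : Fin N) : ℕ :=
  if (k : ℕ) < j - i then i + 1 + (k : ℕ)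
  else if (k : ℕ) = j - i then i
  else if (k : ℕ) ≤ N - 1 - i then (k : ℕ) + i
  else N - 1 - (k : ℕ)

/-- The subset `Γ_N = {σ_{i,j} : i ≤ j} ⊆ Ξ_N`. -/
def GammaN {N : ℕ} : Set (Equiv.Perm (Fin N)) :=
  {σ | ∃ i j : ℕ, i ≤ j ∧ j < N ∧ ∀ k : Fin N, (σ k : ℕ) = gammaVal N i j k}


/-!
By induction on `k`, `(R_D)_k` is the free `D`-module on the ordered monomials in
`x_1, …, x_k`, and a product `x^f x^g` of such monomials is a unit of `D` times `x^(f+g)` plus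
colex-smaller monomials with coefficients in `D`: moving `x_j` past a monomial in earlier variables
produces the eigenvalues `λ_{ji}` of `θ_j`, which are units of `D`, and values of `δ_j` in
`(R_D)_j`, because `θ_j^{±1}` and `δ_j` preserve the `D`-form. Hence leading terms multiply up to
units of `D`.

(a) Normality of the prime element `y_k` in `R_{k+1}` gives `y_k a = b y_k` with `b ∈ R_{k+1}`.
Since `y_k` has leading coefficient `1`, peeling off leading terms shows that `b` has coefficients
in `D`, i.e. `b ∈ (R_D)_{k+1}`.

(b) By induction on `j`, the monoid generated by `Dˣ` and the `y_i` with `i ∈ I`, `i < j` is a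
left and right Ore set in `(R_D)_j`. In the step, `y_j` is normal in `(R_D)_{j+1}` by (a), and for
`i < j` homogeneity gives `x_j y_i = μ y_i x_j + δ_j(y_i)` with `μ ∈ Dˣ`, so the Ore condition
for `y_i` lifts from `(R_D)_j` to `(R_D)_{j+1} = (R_D)_j[x_j; θ_j, δ_j]` by induction on the
degree in `x_j`.
-/

instance {ι : Type*} [LinearOrder ι] {α : ι → Type*} [∀ i, AddCommMonoid (α i)]
    [∀ i, PartialOrder (α i)] [∀ i, IsOrderedCancelAddMonoid (α i)] :
    IsOrderedCancelAddMonoid (Colex (∀ i, α i)) where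
  add_le_add_left _ _ hxy z :=
    hxy.elim (fun hxyz => hxyz ▸ le_rfl) fun ⟨i, hi⟩ =>
      Or.inr ⟨i, fun j hji => congr_arg (· + z j) (hi.1 j hji), add_lt_add_left hi.2 _⟩
  le_of_add_le_add_left _ _ _ hxyz :=
    hxyz.elim (fun h => (add_left_cancel h).le) fun ⟨i, hi⟩ =>
      Or.inr ⟨i, fun j hj => (add_left_cancel <| hi.1 j hj), lt_of_add_lt_add_left hi.2⟩

section Exponents

variable {N : ℕ}

theorem revLexLt_iff {f g : Fin N → ℕ} : revLexLt f g ↔ toColex f < toColex g :=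
  exists_congr fun _ => and_comm

theorem toColex_lt_of_apply_lt {f g : Fin N → ℕ} (j : Fin N) (hj : f j < g j)
    (h : ∀ i, j < i → f i = g i) : toColex f < toColex g :=
  ⟨j, h, hj⟩

def SupportedBelow (k : ℕ) (f : Fin N → ℕ) : Prop := ∀ i : Fin N, f i ≠ 0 → (i : ℕ) < k

theorem SupportedBelow.mono {k k' : ℕ} {f : Fin N → ℕ} (hf : SupportedBelow k f) (h : k ≤ k') :
    SupportedBelow k' f :=
  fun i hi => (hf i hi).trans_le h

theorem SupportedBelow.add {k : ℕ} {f g : Fin N → ℕ} (hf : SupportedBelow k f)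
    (hg : SupportedBelow k g) : SupportedBelow k (f + g) := by
  intro i hi
  by_cases hfi : f i = 0
  · exact hg i (by simpa [hfi] using hi)
  · exact hf i hfi

theorem supportedBelow_zero (k : ℕ) : SupportedBelow k (0 : Fin N → ℕ) :=
  fun _ h => absurd rfl h

theorem supportedBelow_single {k : ℕ} {j : Fin N} (hj : (j : ℕ) < k) (m : ℕ) :
    SupportedBelow k (Pi.single j m) := by
  intro i hi
  obtain rfl : i = j := by by_contra h; simp [h] at hi
  exact hj

theorem SupportedBelow.apply_eq_zero {k : ℕ} {f : Fin N → ℕ} (hf : SupportedBelow k f)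
    {i : Fin N} (hi : k ≤ i) : f i = 0 := by
  by_contra h
  exact absurd (hf i h) (not_lt.mpr hi)

theorem SupportedBelow.of_succ {j : Fin N} {f : Fin N → ℕ} (hf : SupportedBelow (j + 1) f)
    (hfj : f j = 0) : SupportedBelow j f := fun i hi => by
  have h₁ := hf i hi
  have h₂ : (i : ℕ) ≠ j := fun h => hi (Fin.ext h ▸ hfj)
  omega

theorem SupportedBelow.of_toColex_le {k : ℕ} {f g : Fin N → ℕ} (hg : SupportedBelow k g)
    (h : toColex f ≤ toColex g) : SupportedBelow k f := by
  rcases h.eq_or_lt with h | ⟨n, hn, hlt⟩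
  · cases toColex.injective h
    exact hg
  simp only [Pi.toColex_apply] at hn hlt
  intro i hi
  rcases lt_or_ge n i with hni | hin
  · exact hg i (by rwa [← hn i hni])
  · exact lt_of_le_of_lt (Fin.le_iff_val_le_val.mp hin) (hg n (by omega))

theorem apply_le_of_toColex_le {j : Fin N} {f g : Fin N → ℕ} (hg : SupportedBelow (j + 1) g)
    (h : toColex f ≤ toColex g) : f j ≤ g j := by
  rcases h.eq_or_lt with h | ⟨n, hn, hlt⟩
  · cases toColex.injective h
    exact le_rfl
  simp only [Pi.toColex_apply] at hn hlt
  rcases lt_trichotomy n j with hnj | rfl | hjn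
  · exact (hn j hnj).le
  · exact hlt.le
  · have := hg n (by omega)
    have : (j : ℕ) < n := hjn
    omega

theorem exists_split_at (g : Fin N → ℕ) (j : Fin N) :
    ∃ gl gu : Fin N → ℕ, g = gl + gu ∧ SupportedBelow j gl ∧ ∀ i, i < j → gu i = 0 := by
  refine ⟨fun i => if i < j then g i else 0, fun i => if i < j then 0 else g i,
    funext fun i => ?_, fun i hi => ?_, fun i hi => if_pos hi⟩
  · by_cases h : i < j <;> simp [h]
  · by_contra h
    exact hi (if_neg fun hij => h (Fin.lt_def.mp hij))

theorem exists_top_variable {f : Fin N → ℕ} (hf : f ≠ 0) :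
    ∃ (j : Fin N) (f' : Fin N → ℕ), f = f' + Pi.single j 1 ∧ ∀ i, j < i → f' i = 0 := by
  have hne : (Finset.univ.filter fun i => f i ≠ 0).Nonempty := by
    obtain ⟨i, hi⟩ := Function.ne_iff.mp hf
    exact ⟨i, by simpa using hi⟩
  set j := (Finset.univ.filter fun i => f i ≠ 0).max' hne
  have hj : f j ≠ 0 := by simpa using Finset.max'_mem _ hne
  have htop : ∀ i, j < i → f i = 0 := fun i hi => by
    by_contra h
    exact absurd (Finset.le_max' _ i (by simpa using h)) (not_le.mpr hi)
  refine ⟨j, Function.update f j (f j - 1), funext fun i => ?_, fun i hi => ?_⟩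
  · by_cases h : i = j
    · subst h
      rw [Pi.add_apply, Function.update_self, Pi.single_eq_same]
      omega
    · simp [h]
  · rw [Function.update_of_ne hi.ne']
    exact htop i hi

end Exponents

section OrderedMonomials

variable {R : Type} [Ring R] {N : ℕ} (x : Fin N → R)

theorem lt_of_mem_take_finRange {k : ℕ} {i : Fin N} (h : i ∈ (List.finRange N).take k) :
    (i : ℕ) < k := by
  obtain ⟨n, hn, rfl⟩ := List.mem_take_iff_getElem.mp h
  simp only [List.getElem_finRange, Fin.val_cast]
  omega

theorem le_of_mem_drop_finRange {k : ℕ} {i : Fin N} (h : i ∈ (List.finRange N).drop k) :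
    k ≤ (i : ℕ) := by
  obtain ⟨n, hn, rfl⟩ := List.mem_drop_iff_getElem.mp h
  simp [List.getElem_finRange]

theorem prod_map_pow_congr {l : List (Fin N)} {f g : Fin N → ℕ} (h : ∀ i ∈ l, f i = g i) :
    (l.map fun i => x i ^ f i).prod = (l.map fun i => x i ^ g i).prod :=
  congrArg _ (List.map_congr_left fun i hi => by rw [h i hi])

theorem prod_map_pow_eq_one {l : List (Fin N)} {f : Fin N → ℕ} (h : ∀ i ∈ l, f i = 0) :
    (l.map fun i => x i ^ f i).prod = 1 :=
  (prod_map_pow_congr x (g := 0) h).trans (by simp)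

theorem oMono_eq_take_mul_pow_mul_drop (f : Fin N → ℕ) (j : Fin N) :
    oMono x f = (((List.finRange N).take j).map fun i => x i ^ f i).prod * x j ^ f j *
      (((List.finRange N).drop (j + 1)).map fun i => x i ^ f i).prod := by
  have hlen : (j : ℕ) < (List.finRange N).length := by simp
  conv_lhs => rw [oMono, ← List.take_append_drop j (List.finRange N),
    List.drop_eq_getElem_cons hlen]
  simp [mul_assoc]

theorem oMono_zero : oMono x 0 = 1 :=
  prod_map_pow_eq_one x fun _ _ => rfl

theorem oMono_single (j : Fin N) (m : ℕ) : oMono x (Pi.single j m) = x j ^ m := by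
  rw [oMono_eq_take_mul_pow_mul_drop x _ j, Pi.single_eq_same,
    prod_map_pow_eq_one x fun i hi => by
      have := lt_of_mem_take_finRange hi
      rw [Pi.single_apply, if_neg (by rintro rfl; omega)],
    prod_map_pow_eq_one x fun i hi => by
      have := le_of_mem_drop_finRange hi
      rw [Pi.single_apply, if_neg (by rintro rfl; omega)], one_mul, mul_one]

theorem oMono_add_of_le {f g : Fin N → ℕ} (j : Fin N) (hf : ∀ i, j < i → f i = 0)
    (hg : ∀ i, i < j → g i = 0) : oMono x (f + g) = oMono x f * oMono x g := by
  have htake : ∀ i ∈ (List.finRange N).take j, i < j := fun i hi => lt_of_mem_take_finRange hi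
  have hdrop : ∀ i ∈ (List.finRange N).drop (j + 1), j < i := fun i hi => by
    have := le_of_mem_drop_finRange hi
    exact Fin.lt_def.mpr (by omega)
  rw [oMono_eq_take_mul_pow_mul_drop x (f + g) j, oMono_eq_take_mul_pow_mul_drop x f j,
    oMono_eq_take_mul_pow_mul_drop x g j,
    prod_map_pow_congr x (f := f + g) (g := f) fun i hi => by simp [hg i (htake i hi)],
    prod_map_pow_congr x (f := f + g) (g := g) fun i hi => by simp [hf i (hdrop i hi)],
    prod_map_pow_eq_one x (f := g) fun i hi => hg i (htake i hi),
    prod_map_pow_eq_one x (f := f) fun i hi => hf i (hdrop i hi), Pi.add_apply, pow_add]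
  simp only [mul_one, one_mul, mul_assoc]

theorem oMono_mem {S : Type*} [SetLike S R] [SubmonoidClass S R] {s : S} {f : Fin N → ℕ}
    (h : ∀ i, f i ≠ 0 → x i ∈ s) : oMono x f ∈ s := by
  refine list_prod_mem fun y hy => ?_
  obtain ⟨i, -, rfl⟩ := List.mem_map.mp hy
  by_cases hi : f i = 0
  · rw [hi, pow_zero]; exact one_mem s
  · exact pow_mem (h i hi) _

end OrderedMonomials

theorem list_prod_map_smul {ι S A : Type*} [CommSemiring S] [Semiring A] [Algebra S A]
    (l : List ι) (c : ι → S) (w : ι → A) :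
    (l.map fun i => c i • w i).prod = (l.map c).prod • (l.map w).prod := by
  induction l with
  | nil => simp
  | cons a l ih => simp only [List.map_cons, List.prod_cons, ih, smul_mul_smul_comm]

theorem mem_span_image_subring {ι K M : Type*} [Field K] [AddCommGroup M] [Module K M]
    (b : Module.Basis ι K M) {D : Subring K} {s : Set ι} {v : M} :
    v ∈ Submodule.span D (b '' s) ↔ (∀ i, b.repr v i ∈ D) ∧ ↑(b.repr v).support ⊆ s := by
  constructor
  · intro hv
    refine ⟨fun i => ?_, b.mem_span_image.mp (Submodule.span_le_restrictScalars D K _ hv)⟩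
    induction hv using Submodule.span_induction with
    | mem _ hx =>
      obtain ⟨j, -, rfl⟩ := hx
      rw [b.repr_self, Finsupp.single_apply]
      split_ifs
      exacts [D.one_mem, D.zero_mem]
    | zero => simp [D.zero_mem]
    | add _ _ _ _ h₁ h₂ => simpa using D.add_mem h₁ h₂
    | smul a x _ h =>
      change b.repr ((a : K) • x) i ∈ D
      simpa using D.mul_mem a.2 h
  · rintro ⟨hcoeff, hs⟩
    rw [← b.linearCombination_repr v, Finsupp.linearCombination_apply]
    exact Submodule.sum_mem _ fun i hi =>
      Submodule.smul_mem _ (⟨_, hcoeff i⟩ : D) (Submodule.subset_span ⟨i, hs hi, rfl⟩)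

section OreSubmonoids

variable {R : Type*} [Ring R]

def leftOreSubmonoid (S : Set R) (T : Submonoid R) : Submonoid R where
  carrier := {s | ∀ a ∈ S, ∃ b ∈ S, ∃ t ∈ T, t * a = b * s}
  one_mem' := fun a ha => ⟨a, ha, 1, one_mem T, by rw [one_mul, mul_one]⟩
  mul_mem' := fun {s₁ s₂} h₁ h₂ a ha => by
    obtain ⟨b₂, hb₂, t₂, ht₂, e₂⟩ := h₂ a ha
    obtain ⟨b₁, hb₁, t₁, ht₁, e₁⟩ := h₁ b₂ hb₂
    exact ⟨b₁, hb₁, t₁ * t₂, mul_mem ht₁ ht₂, by rw [mul_assoc, e₂, ← mul_assoc, e₁, mul_assoc]⟩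

def rightOreSubmonoid (S : Set R) (T : Submonoid R) : Submonoid R where
  carrier := {s | ∀ a ∈ S, ∃ b ∈ S, ∃ t ∈ T, a * t = s * b}
  one_mem' := fun a ha => ⟨a, ha, 1, one_mem T, by rw [one_mul, mul_one]⟩
  mul_mem' := fun {s₁ s₂} h₁ h₂ a ha => by
    obtain ⟨b₁, hb₁, t₁, ht₁, e₁⟩ := h₁ a ha
    obtain ⟨b₂, hb₂, t₂, ht₂, e₂⟩ := h₂ b₁ hb₁
    exact ⟨b₂, hb₂, t₁ * t₂, mul_mem ht₁ ht₂, by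
      rw [← mul_assoc, e₁, mul_assoc, e₂, ← mul_assoc]⟩

theorem leftOreSubmonoid_mono {S : Set R} {T T' : Submonoid R} (h : T ≤ T') :
    leftOreSubmonoid S T ≤ leftOreSubmonoid S T' := fun _ hs a ha => by
  obtain ⟨b, hb, t, ht, e⟩ := hs a ha
  exact ⟨b, hb, t, h ht, e⟩

theorem rightOreSubmonoid_mono {S : Set R} {T T' : Submonoid R} (h : T ≤ T') :
    rightOreSubmonoid S T ≤ rightOreSubmonoid S T' := fun _ hs a ha => by
  obtain ⟨b, hb, t, ht, e⟩ := hs a ha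
  exact ⟨b, hb, t, h ht, e⟩

theorem mem_leftOreSubmonoid_of_isNormalInSR {R : Type} [Ring R] {S : Subring R}
    {T : Submonoid R} {p : R} (hp : p ∈ T) (hn : IsNormalInSR S p) :
    p ∈ leftOreSubmonoid S T := fun a ha => by
  obtain ⟨b, hb, e⟩ := hn.1 a ha
  exact ⟨b, hb, p, hp, e⟩

theorem mem_rightOreSubmonoid_of_isNormalInSR {R : Type} [Ring R] {S : Subring R}
    {T : Submonoid R} {p : R} (hp : p ∈ T) (hn : IsNormalInSR S p) :
    p ∈ rightOreSubmonoid S T := fun a ha => by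
  obtain ⟨b, hb, e⟩ := hn.2 a ha
  exact ⟨b, hb, p, hp, e⟩

theorem isNormalInSR_of_commute {R : Type} [Ring R] {S : Subring R} {p : R}
    (hc : ∀ a, Commute p a) : IsNormalInSR S p :=
  ⟨fun a ha => ⟨a, ha, hc a⟩, fun a ha => ⟨a, ha, (hc a).symm⟩⟩

end OreSubmonoids

namespace CGLExt

variable {K : Type} [Field K] {R : Type} [Ring R] [Algebra K R] {N : ℕ}

def monomialSpan (E : CGLExt K R N) (S : Type*) [CommRing S] [Algebra S R]
    (s : Set (Fin N → ℕ)) : Submodule S R :=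
  Submodule.span S (E.pbw '' s)

def Straightens (E : CGLExt K R N) (D : Subring K) (k : ℕ) : Prop :=
  ∀ f g, SupportedBelow k f → SupportedBelow k g → ∃ q ∈ D.toSubmonoid.units,
    E.pbw f * E.pbw g - (q : K) • E.pbw (f + g) ∈
      E.monomialSpan D {h | toColex h < toColex (f + g)}

variable {E : CGLExt K R N} {D : Subring K}

section
variable {S : Type*} [CommRing S] [Algebra S R]

theorem pbw_mem_monomialSpan {s : Set (Fin N → ℕ)} {f : Fin N → ℕ} (hf : f ∈ s) :
    E.pbw f ∈ E.monomialSpan S s :=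
  Submodule.subset_span ⟨f, hf, rfl⟩

theorem monomialSpan_mono {s t : Set (Fin N → ℕ)} (h : s ⊆ t) :
    E.monomialSpan S s ≤ E.monomialSpan S t :=
  Submodule.span_mono (Set.image_mono h)

theorem mul_mem_monomialSpan {s t u : Set (Fin N → ℕ)}
    (h : ∀ f ∈ s, ∀ g ∈ t, E.pbw f * E.pbw g ∈ E.monomialSpan S u) {a b : R}
    (ha : a ∈ E.monomialSpan S s) (hb : b ∈ E.monomialSpan S t) :
    a * b ∈ E.monomialSpan S u := by
  have hle : E.monomialSpan S s * E.monomialSpan S t ≤ E.monomialSpan S u := by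
    rw [monomialSpan, monomialSpan, Submodule.span_mul_span, Submodule.span_le]
    rintro _ ⟨_, ⟨f, hf, rfl⟩, _, ⟨g, hg, rfl⟩, rfl⟩
    exact h f hf g hg
  exact hle (Submodule.mul_mem_mul ha hb)

end

theorem mem_monomialSpan_iff {s : Set (Fin N → ℕ)} {v : R} :
    v ∈ E.monomialSpan D s ↔ (∀ f, E.pbw.repr v f ∈ D) ∧ ↑(E.pbw.repr v).support ⊆ s :=
  mem_span_image_subring E.pbw

theorem mem_monomialSpan_field_iff {s : Set (Fin N → ℕ)} {v : R} :
    v ∈ E.monomialSpan K s ↔ ↑(E.pbw.repr v).support ⊆ s :=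
  E.pbw.mem_span_image

theorem mem_monomialSpan_field {s : Set (Fin N → ℕ)} {v : R} (hv : v ∈ E.monomialSpan D s) :
    v ∈ E.monomialSpan K s :=
  Submodule.span_le_restrictScalars D K _ hv

theorem mem_monomialSpan_of_mem_field {s : Set (Fin N → ℕ)} {v : R}
    (hv : v ∈ E.monomialSpan D Set.univ) (hvK : v ∈ E.monomialSpan K s) :
    v ∈ E.monomialSpan D s :=
  mem_monomialSpan_iff.mpr ⟨(mem_monomialSpan_iff.mp hv).1, mem_monomialSpan_field_iff.mp hvK⟩

theorem smul_mem_monomialSpan {s : Set (Fin N → ℕ)} {c : K} (hc : c ∈ D) {v : R}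
    (hv : v ∈ E.monomialSpan D s) : c • v ∈ E.monomialSpan D s :=
  Submodule.smul_mem _ (⟨c, hc⟩ : D) hv

theorem x_eq_pbw (i : Fin N) : E.x i = E.pbw (Pi.single i 1) := by
  rw [E.pbw_eq, oMono_single, pow_one]

theorem x_pow_eq_pbw (i : Fin N) (m : ℕ) : E.x i ^ m = E.pbw (Pi.single i m) := by
  rw [E.pbw_eq, oMono_single]

theorem one_eq_pbw : (1 : R) = E.pbw 0 := by
  rw [E.pbw_eq, oMono_zero]

theorem pbw_add_of_le {f g : Fin N → ℕ} (j : Fin N) (hf : ∀ i, j < i → f i = 0)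
    (hg : ∀ i, i < j → g i = 0) : E.pbw (f + g) = E.pbw f * E.pbw g := by
  simp only [E.pbw_eq, oMono_add_of_le E.x j hf hg]

theorem pbw_mem_Rk {k : ℕ} {f : Fin N → ℕ} (hf : SupportedBelow k f) :
    E.pbw f ∈ Rk K E.x k := by
  rw [E.pbw_eq]
  exact oMono_mem E.x fun i hi => Algebra.subset_adjoin ⟨i, hf i hi, rfl⟩

theorem x_mem_Rk {k : ℕ} {i : Fin N} (hi : (i : ℕ) < k) : E.x i ∈ Rk K E.x k :=
  Algebra.subset_adjoin ⟨i, hi, rfl⟩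

theorem algebraMap_mem_DRk (k : ℕ) {c : K} (hc : c ∈ D) : algebraMap K R c ∈ DRk K D E.x k :=
  Subring.subset_closure (Or.inl ⟨c, hc, rfl⟩)

theorem x_mem_DRk {k : ℕ} {i : Fin N} (hi : (i : ℕ) < k) : E.x i ∈ DRk K D E.x k :=
  Subring.subset_closure (Or.inr ⟨i, hi, rfl⟩)

theorem smul_mem_DRk {k : ℕ} {c : K} (hc : c ∈ D) {v : R} (hv : v ∈ DRk K D E.x k) :
    c • v ∈ DRk K D E.x k := by
  rw [Algebra.smul_def]
  exact mul_mem (algebraMap_mem_DRk k hc) hv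

theorem DRk_mono {k k' : ℕ} (h : k ≤ k') : DRk K D E.x k ≤ DRk K D E.x k' :=
  Subring.closure_mono (Set.union_subset_union_right _ fun _ ⟨i, hi, hr⟩ => ⟨i, hi.trans_le h, hr⟩)

theorem DRfull_eq_DRk : DRfull K D E.x = DRk K D E.x N := by
  simp only [DRfull, DRk, Dspan, Fin.is_lt, true_and]

theorem mem_Rk_of_mem_DRk {k : ℕ} {v : R} (hv : v ∈ DRk K D E.x k) : v ∈ Rk K E.x k := by
  refine (Subring.closure_le (t := (Rk K E.x k).toSubring)).mpr ?_ hv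
  rintro _ (⟨c, -, rfl⟩ | ⟨i, hi, rfl⟩)
  exacts [Subalgebra.algebraMap_mem _ c, x_mem_Rk hi]

theorem monomialSpan_le_DRk {k : ℕ} {v : R}
    (hv : v ∈ E.monomialSpan D {f | SupportedBelow k f}) : v ∈ DRk K D E.x k := by
  induction hv using Submodule.span_induction with
  | mem _ h =>
    obtain ⟨f, hf, rfl⟩ := h
    rw [E.pbw_eq]
    exact oMono_mem E.x fun i hi => x_mem_DRk (hf i hi)
  | zero => exact zero_mem _
  | add _ _ _ _ h₁ h₂ => exact add_mem h₁ h₂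
  | smul a _ _ h => exact smul_mem_DRk a.2 h

theorem pbw_mem_DRk {k : ℕ} {f : Fin N → ℕ} (hf : SupportedBelow k f) :
    E.pbw f ∈ DRk K D E.x k :=
  monomialSpan_le_DRk (pbw_mem_monomialSpan hf)

theorem theta_pbw (j : Fin N) {f : Fin N → ℕ} (hf : SupportedBelow j f) :
    E.θ j (E.pbw f) = ((∏ i, E.lamM j i ^ f i : Kˣ) : K) • E.pbw f := by
  have key : ∀ i, E.act (E.hElt j) (E.x i ^ f i) =
      ((E.lamM j i ^ f i : Kˣ) : K) • E.x i ^ f i := by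
    intro i
    by_cases hi : f i = 0
    · simp [hi]
    · rw [map_pow, E.lamM_spec j i (hf i hi), smul_pow, Units.val_pow_eq_pow_val]
  rw [← E.hElt_theta j _ (pbw_mem_Rk hf), E.pbw_eq, oMono, map_list_prod, List.map_map]
  simp only [Function.comp_def, key]
  rw [list_prod_map_smul, Units.coe_prod, Fin.prod_univ_def]

theorem theta_smul (k : Fin N) (c : K) {a : R} (ha : a ∈ Rk K E.x k) :
    E.θ k (c • a) = c • E.θ k a := by
  have h0 := E.θ_linear k 1 0 (zero_mem _) 0 (zero_mem _)
  simp only [one_smul, add_zero, left_eq_add] at h0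
  simpa [h0] using E.θ_linear k c a ha 0 (zero_mem _)

theorem thetainv_eq_of_theta_eq (k : Fin N) {a : R} (ha : a ∈ Rk K E.x k) {μ : Kˣ}
    (h : E.θ k a = (μ : K) • a) : E.θinv k a = ((μ⁻¹ : Kˣ) : K) • a := by
  have hmem : ((μ⁻¹ : Kˣ) : K) • a ∈ Rk K E.x k := Subalgebra.smul_mem _ ha _
  have hθ : E.θ k (((μ⁻¹ : Kˣ) : K) • a) = a := by
    rw [theta_smul k _ ha, h, smul_smul, ← Units.val_mul, inv_mul_cancel, Units.val_one,
      one_smul]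
  rw [← E.θ_left_inv k _ hmem, hθ]

/-- Both `θ_k a = μ a` and `θ_k⁻¹ a = μ⁻¹ a` lie in `(R_D)_k`; compare coefficients at `F`. -/
theorem eigenvalue_mem_units (hD : IsDForm D E) {k : Fin N}
    (hA : (DRk K D E.x k : Set R) ⊆ E.monomialSpan D {f | SupportedBelow k f}) {a : R}
    (ha : a ∈ DRk K D E.x k) {F : Fin N → ℕ} (haF : E.pbw.repr a F = 1) {μ : Kˣ}
    (h : E.θ k a = (μ : K) • a) : μ ∈ D.toSubmonoid.units := by
  have haR := mem_Rk_of_mem_DRk ha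
  have hcoeff : ∀ c : K, c • a ∈ DRk K D E.x k → c ∈ D := fun c hc => by
    simpa [haF] using (mem_monomialSpan_iff.mp (hA hc)).1 F
  refine ⟨hcoeff (μ : K) ?_, hcoeff ((μ⁻¹ : Kˣ) : K) ?_⟩
  · rw [← h]
    exact hD.theta_mem k a haR ha
  · rw [← thetainv_eq_of_theta_eq k haR h]
    exact hD.thetainv_mem k a haR ha

theorem lamM_mem_units (hD : IsDForm D E) {j : Fin N}
    (hA : (DRk K D E.x j : Set R) ⊆ E.monomialSpan D {f | SupportedBelow j f}) {i : Fin N}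
    (hij : (i : ℕ) < j) : E.lamM j i ∈ D.toSubmonoid.units := by
  refine eigenvalue_mem_units hD hA (x_mem_DRk hij) (F := Pi.single i 1) ?_ ?_
  · simp [x_eq_pbw]
  · rw [← E.hElt_theta j _ (x_mem_Rk hij)]
    exact E.lamM_spec j i hij

/-- `x_j x^g = q x^(g + e_j) + δ_j(x^{g_{<j}}) x^{g_{≥j}}` with `q ∈ Dˣ` a product of `λ_{ji}`. -/
theorem x_mul_pbw (hD : IsDForm D E) {j : Fin N}
    (hA : (DRk K D E.x j : Set R) ⊆ E.monomialSpan D {f | SupportedBelow j f}) (g : Fin N → ℕ) :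
    ∃ q ∈ D.toSubmonoid.units, E.x j * E.pbw g - (q : K) • E.pbw (g + Pi.single j 1) ∈
      E.monomialSpan D {h | toColex h < toColex (g + Pi.single j 1)} := by
  obtain ⟨gl, gu, rfl, hgl, hgu⟩ := exists_split_at g j
  have hgl_top : ∀ i, j < i → gl i = 0 := fun i hi => hgl.apply_eq_zero hi.le
  have hsplit : E.pbw (gl + gu) = E.pbw gl * E.pbw gu := pbw_add_of_le j hgl_top hgu
  have htarget : E.pbw (gl + gu + Pi.single j 1) = E.pbw gl * (E.x j * E.pbw gu) := by
    rw [add_assoc, add_comm gu,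
      pbw_add_of_le j hgl_top fun i hi => by simp [Pi.single_eq_of_ne hi.ne, hgu i hi],
      pbw_add_of_le j (fun i hi => Pi.single_eq_of_ne hi.ne' 1) hgu, ← x_eq_pbw]
  set q : Kˣ := ∏ i, E.lamM j i ^ gl i
  have hq : q ∈ D.toSubmonoid.units := Subgroup.prod_mem _ fun i _ => by
    by_cases h : gl i = 0
    · simp [h]
    · exact Subgroup.pow_mem _ (lamM_mem_units hD hA (hgl i h)) _
  have hore : E.x j * E.pbw gl = (q : K) • (E.pbw gl * E.x j) + E.δ j (E.pbw gl) := by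
    rw [E.ore j _ (pbw_mem_Rk hgl), theta_pbw j hgl, smul_mul_assoc]
  have hδ : E.δ j (E.pbw gl) ∈ E.monomialSpan D {f | SupportedBelow j f} :=
    hA (hD.delta_mem j _ (pbw_mem_Rk hgl) (pbw_mem_DRk hgl))
  refine ⟨q, hq, ?_⟩
  have hdiff : E.x j * E.pbw (gl + gu) - (q : K) • E.pbw (gl + gu + Pi.single j 1) =
      E.δ j (E.pbw gl) * E.pbw gu := by
    rw [hsplit, htarget, ← mul_assoc, hore, add_mul, smul_mul_assoc, mul_assoc]
    abel
  rw [hdiff]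
  refine mul_mem_monomialSpan (t := {gu}) (fun f hf g' hg' => ?_) hδ (pbw_mem_monomialSpan rfl)
  rw [Set.mem_singleton_iff.mp hg', ← pbw_add_of_le j (fun i hi => hf.apply_eq_zero hi.le) hgu]
  refine pbw_mem_monomialSpan (toColex_lt_of_apply_lt j ?_ fun i hi => ?_)
  · simp [hf.apply_eq_zero le_rfl, hgl.apply_eq_zero le_rfl]
  · simp [hf.apply_eq_zero hi.le, hgl.apply_eq_zero hi.le, Pi.single_eq_of_ne hi.ne']

theorem straightens_add_single {k : ℕ} {j : Fin N} {f : Fin N → ℕ} (hjk : (j : ℕ) < k)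
    (hf_top : ∀ i, j < i → f i = 0)
    (hx : ∀ g, ∃ q ∈ D.toSubmonoid.units, E.x j * E.pbw g - (q : K) • E.pbw (g + Pi.single j 1) ∈
      E.monomialSpan D {h | toColex h < toColex (g + Pi.single j 1)})
    (ih : ∀ g, SupportedBelow k g → ∃ q ∈ D.toSubmonoid.units,
      E.pbw f * E.pbw g - (q : K) • E.pbw (f + g) ∈
        E.monomialSpan D {h | toColex h < toColex (f + g)})
    {g : Fin N → ℕ} (hg : SupportedBelow k g) :
    ∃ q ∈ D.toSubmonoid.units,
      E.pbw (f + Pi.single j 1) * E.pbw g - (q : K) • E.pbw (f + Pi.single j 1 + g) ∈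
        E.monomialSpan D {h | toColex h < toColex (f + Pi.single j 1 + g)} := by
  have hge : SupportedBelow k (g + Pi.single j 1) := hg.add (supportedBelow_single hjk 1)
  have hsum_eq : f + (g + Pi.single j 1) = f + Pi.single j 1 + g := by abel
  obtain ⟨q₁, hq₁, h₁⟩ := hx g
  obtain ⟨q₂, hq₂, h₂⟩ := ih (g + Pi.single j 1) hge
  rw [hsum_eq] at h₂
  refine ⟨q₁ * q₂, mul_mem hq₁ hq₂, ?_⟩
  have hdecomp : E.pbw (f + Pi.single j 1) * E.pbw g -
      ((q₁ * q₂ : Kˣ) : K) • E.pbw (f + Pi.single j 1 + g) =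
      (q₁ : K) • (E.pbw f * E.pbw (g + Pi.single j 1) -
        (q₂ : K) • E.pbw (f + Pi.single j 1 + g)) +
      E.pbw f * (E.x j * E.pbw g - (q₁ : K) • E.pbw (g + Pi.single j 1)) := by
    rw [pbw_add_of_le j hf_top fun i hi => Pi.single_eq_of_ne hi.ne 1, ← x_eq_pbw, Units.val_mul,
      mul_smul, smul_sub, mul_sub, mul_smul_comm, mul_assoc]
    abel
  rw [hdecomp]
  refine add_mem (smul_mem_monomialSpan hq₁.1 h₂) (mul_mem_monomialSpan (s := {f})
    (fun _ hf' h hh => ?_) (pbw_mem_monomialSpan rfl) h₁)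
  rw [Set.mem_singleton_iff.mp hf']
  have hlt : toColex (f + h) < toColex (f + Pi.single j 1 + g) := by
    rw [← hsum_eq]
    exact add_lt_add_right hh _
  obtain ⟨q₃, hq₃, h₃⟩ := ih h (hge.of_toColex_le hh.le)
  rw [← sub_add_cancel (E.pbw f * E.pbw h) ((q₃ : K) • E.pbw (f + h))]
  exact add_mem (monomialSpan_mono (fun _ h' => lt_trans h' hlt) h₃)
    (smul_mem_monomialSpan hq₃.1 (pbw_mem_monomialSpan hlt))

theorem straightens_of_lt (hD : IsDForm D E) {k : ℕ}
    (hA : ∀ j : Fin N, (j : ℕ) < k →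
      (DRk K D E.x j : Set R) ⊆ E.monomialSpan D {f | SupportedBelow j f}) :
    E.Straightens D k := by
  suffices ∀ n f g, ∑ i, f i = n → SupportedBelow k f → SupportedBelow k g →
      ∃ q ∈ D.toSubmonoid.units, E.pbw f * E.pbw g - (q : K) • E.pbw (f + g) ∈
        E.monomialSpan D {h | toColex h < toColex (f + g)} from
    fun f g => this _ f g rfl
  intro n
  induction n with
  | zero =>
    intro f g hsum _ _
    obtain rfl : f = 0 := funext fun i => Finset.sum_eq_zero_iff.mp hsum i (Finset.mem_univ i)
    exact ⟨1, one_mem _, by simp [← one_eq_pbw]⟩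
  | succ n ih =>
    intro f g hsum hf hg
    obtain ⟨j, f', rfl, hf'_top⟩ := exists_top_variable (f := f) (by rintro rfl; simp at hsum)
    have hf'sum : ∑ i, f' i = n := by
      simp only [Pi.add_apply, Finset.sum_add_distrib, Finset.sum_pi_single', Finset.mem_univ,
        if_true] at hsum
      omega
    have hjk : (j : ℕ) < k := hf j (by simp)
    have hf' : SupportedBelow k f' := fun i hi => hf i (by simp [hi])
    exact straightens_add_single hjk hf'_top (x_mul_pbw hD (hA j hjk))
      (fun g hg => ih f' g hf'sum hf' hg) hg

theorem Straightens.pbw_mul_pbw_mem {k : ℕ} (hB : E.Straightens D k) {f g : Fin N → ℕ}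
    (hf : SupportedBelow k f) (hg : SupportedBelow k g) :
    E.pbw f * E.pbw g ∈ E.monomialSpan D {h | toColex h ≤ toColex (f + g)} := by
  obtain ⟨q, hq, h⟩ := hB f g hf hg
  rw [← sub_add_cancel (E.pbw f * E.pbw g) ((q : K) • E.pbw (f + g))]
  exact add_mem (monomialSpan_mono (fun x (hx : toColex x < toColex (f + g)) => hx.le) h)
    (smul_mem_monomialSpan hq.1
      (pbw_mem_monomialSpan (show toColex (f + g) ≤ toColex (f + g) from le_rfl)))

theorem DRk_subset_monomialSpan {k : ℕ} (hB : E.Straightens D k) :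
    (DRk K D E.x k : Set R) ⊆ E.monomialSpan D {f | SupportedBelow k f} := by
  let A : Subalgebra D R := (E.monomialSpan D {f | SupportedBelow k f}).toSubalgebra
    (by rw [one_eq_pbw (E := E)]; exact pbw_mem_monomialSpan (supportedBelow_zero k))
    fun _ _ => mul_mem_monomialSpan fun f hf g hg =>
      monomialSpan_mono (fun _ hh => (SupportedBelow.add hf hg).of_toColex_le hh)
        (hB.pbw_mul_pbw_mem hf hg)
  refine (Subring.closure_le (t := A.toSubring)).mpr ?_
  rintro _ (⟨c, hc, rfl⟩ | ⟨i, hi, rfl⟩)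
  · exact A.algebraMap_mem ⟨c, hc⟩
  · rw [x_eq_pbw]; exact pbw_mem_monomialSpan (supportedBelow_single hi 1)

theorem DRk_subset_monomialSpan_and_straightens (hD : IsDForm D E) (k : ℕ) :
    (DRk K D E.x k : Set R) ⊆ E.monomialSpan D {f | SupportedBelow k f} ∧ E.Straightens D k := by
  induction k using Nat.strong_induction_on with
  | _ k ih =>
    have hB := straightens_of_lt hD fun j hj => (ih j hj).1
    exact ⟨DRk_subset_monomialSpan hB, hB⟩

theorem mem_DRk_iff (hD : IsDForm D E) {k : ℕ} {v : R} :
    v ∈ DRk K D E.x k ↔ v ∈ E.monomialSpan D {f | SupportedBelow k f} :=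
  ⟨fun h => (DRk_subset_monomialSpan_and_straightens hD k).1 h, monomialSpan_le_DRk⟩

theorem pbw_mul_pbw (hD : IsDForm D E) (f g : Fin N → ℕ) :
    ∃ q ∈ D.toSubmonoid.units, E.pbw f * E.pbw g - (q : K) • E.pbw (f + g) ∈
      E.monomialSpan D {h | toColex h < toColex (f + g)} :=
  (DRk_subset_monomialSpan_and_straightens hD N).2 f g (fun i _ => i.2) fun i _ => i.2

theorem pbw_mul_pbw_mem (hD : IsDForm D E) (f g : Fin N → ℕ) :
    E.pbw f * E.pbw g ∈ E.monomialSpan D {h | toColex h ≤ toColex (f + g)} :=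
  Straightens.pbw_mul_pbw_mem (DRk_subset_monomialSpan_and_straightens hD N).2
    (fun i _ => i.2) fun i _ => i.2

theorem mul_mem_monomialSpan_of_le (hD : IsDForm D E) {s t u : Set (Fin N → ℕ)}
    (hu : ∀ f ∈ s, ∀ g ∈ t, ∀ h, toColex h ≤ toColex (f + g) → h ∈ u) {a b : R}
    (ha : a ∈ E.monomialSpan D s) (hb : b ∈ E.monomialSpan D t) :
    a * b ∈ E.monomialSpan D u :=
  mul_mem_monomialSpan (fun f hf g hg =>
    monomialSpan_mono (fun h hh => hu f hf g hg h hh) (pbw_mul_pbw_mem hD f g)) ha hb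

theorem mul_mem_monomialSpan_field_of_le (hD : IsDForm D E) {s t u : Set (Fin N → ℕ)}
    (hu : ∀ f ∈ s, ∀ g ∈ t, ∀ h, toColex h ≤ toColex (f + g) → h ∈ u) {a b : R}
    (ha : a ∈ E.monomialSpan K s) (hb : b ∈ E.monomialSpan K t) :
    a * b ∈ E.monomialSpan K u :=
  mul_mem_monomialSpan (fun f hf g hg => monomialSpan_mono (fun h hh => hu f hf g hg h hh)
    (mem_monomialSpan_field (pbw_mul_pbw_mem hD f g))) ha hb

theorem mem_monomialSpan_of_mem_Rk (hD : IsDForm D E) {k : ℕ} {v : R} (hv : v ∈ Rk K E.x k) :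
    v ∈ E.monomialSpan K {f | SupportedBelow k f} := by
  let A : Subalgebra K R := (E.monomialSpan K {f | SupportedBelow k f}).toSubalgebra
    (by rw [one_eq_pbw (E := E)]; exact pbw_mem_monomialSpan (supportedBelow_zero k))
    fun _ _ => mul_mem_monomialSpan_field_of_le hD fun f hf g hg _ hh =>
      (SupportedBelow.add hf hg).of_toColex_le hh
  refine (Algebra.adjoin_le (S := A) ?_) hv
  rintro _ ⟨i, hi, rfl⟩
  rw [x_eq_pbw]; exact pbw_mem_monomialSpan (supportedBelow_single hi 1)

theorem isLeadingTerm_iff {u : R} {c : K} {F : Fin N → ℕ} :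
    IsLeadingTerm E u c F ↔
      c ≠ 0 ∧ u - c • E.pbw F ∈ E.monomialSpan K {h | toColex h < toColex F} := by
  have hrepr : ∀ h, E.pbw.repr (u - c • E.pbw F) h = E.pbw.repr u h - if h = F then c else 0 :=
    fun h => by simp [Finsupp.single_apply, eq_comm]
  simp only [IsLeadingTerm, mem_monomialSpan_field_iff, Set.subset_def, Finset.mem_coe,
    Finsupp.mem_support_iff, hrepr, Set.mem_ofPred_eq, revLexLt_iff]
  constructor
  · rintro ⟨hc, hF, hlt⟩
    refine ⟨hc, fun h hh => ?_⟩
    by_cases hhF : h = F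
    · subst hhF; simp [hF] at hh
    · simp only [hhF, if_false, sub_zero] at hh
      exact (hlt h hh).resolve_left hhF
  · rintro ⟨hc, hlt⟩
    have hF : E.pbw.repr u F = c := by
      by_contra hne
      exact lt_irrefl _ (hlt F (by simpa [sub_eq_zero] using hne))
    refine ⟨hc, hF, fun h hh => ?_⟩
    by_cases hhF : h = F
    · exact Or.inl hhF
    · exact Or.inr (hlt h (by simpa [hhF] using hh))

theorem exists_isLeadingTerm {u : R} (hu : u ≠ 0) : ∃ c F, IsLeadingTerm E u c F := by
  have hne : (E.pbw.repr u).support.Nonempty := by simpa using hu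
  obtain ⟨F, hF, hmax⟩ := Finset.exists_max_image _ toColex hne
  refine ⟨E.pbw.repr u F, F, Finsupp.mem_support_iff.mp hF, rfl, fun g hg => ?_⟩
  rw [revLexLt_iff]
  exact (hmax g (Finsupp.mem_support_iff.mpr hg)).eq_or_lt.imp_left fun h => toColex.injective h

theorem isLeadingTerm_pbw (F : Fin N → ℕ) : IsLeadingTerm E (E.pbw F) 1 F :=
  isLeadingTerm_iff.mpr ⟨one_ne_zero, by simp [zero_mem]⟩

end CGLExt

section LeadingTerms

open CGLExt

variable {K : Type} [Field K] {R : Type} [Ring R] [Algebra K R] {N : ℕ} {E : CGLExt K R N}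
  {D : Subring K}

theorem IsLeadingTerm.ne_zero {u : R} {c : K} {F : Fin N → ℕ} (h : IsLeadingTerm E u c F) :
    u ≠ 0 := by
  rintro rfl
  exact h.1 (by simpa using h.2.1.symm)

theorem IsLeadingTerm.mem_monomialSpan {u : R} {c : K} {F : Fin N → ℕ}
    (h : IsLeadingTerm E u c F) : u ∈ E.monomialSpan K {h | toColex h ≤ toColex F} := by
  rw [← sub_add_cancel u (c • E.pbw F)]
  exact add_mem (monomialSpan_mono (fun x (hx : toColex x < toColex F) => hx.le)
      (isLeadingTerm_iff.mp h).2)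
    (Submodule.smul_mem _ c (pbw_mem_monomialSpan (show toColex F ≤ toColex F from le_rfl)))

theorem IsLeadingTerm.mul (hD : IsDForm D E) {u v : R} {a b : K} {F G : Fin N → ℕ}
    (hu : IsLeadingTerm E u a F) (hv : IsLeadingTerm E v b G) :
    ∃ q ∈ D.toSubmonoid.units, IsLeadingTerm E (u * v) ((q : K) * (a * b)) (F + G) := by
  obtain ⟨q, hq, hFG⟩ := pbw_mul_pbw hD F G
  refine ⟨q, hq, isLeadingTerm_iff.mpr ⟨by simp [hu.1, hv.1], ?_⟩⟩
  have hdecomp : u * v - ((q : K) * (a * b)) • E.pbw (F + G) =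
      (u - a • E.pbw F) * v + a • (E.pbw F * (v - b • E.pbw G)) +
        (a * b) • (E.pbw F * E.pbw G - (q : K) • E.pbw (F + G)) := by
    simp only [sub_mul, mul_sub, smul_sub, smul_mul_assoc, mul_smul_comm, smul_smul]
    rw [mul_comm (q : K)]
    abel
  rw [hdecomp]
  refine add_mem (add_mem ?_ (Submodule.smul_mem _ a ?_))
    (Submodule.smul_mem _ _ (mem_monomialSpan_field hFG))
  · refine mul_mem_monomialSpan_field_of_le hD (fun f (hf : toColex f < toColex F) g
      (hg : toColex g ≤ toColex G) h (hh : toColex h ≤ toColex (f + g)) => ?_)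
      (isLeadingTerm_iff.mp hu).2 hv.mem_monomialSpan
    exact hh.trans_lt (add_lt_add_of_lt_of_le hf hg)
  · refine mul_mem_monomialSpan_field_of_le hD (fun f (hf : f = F) g
      (hg : toColex g < toColex G) h (hh : toColex h ≤ toColex (f + g)) => ?_)
      (pbw_mem_monomialSpan rfl) (isLeadingTerm_iff.mp hv).2
    subst hf
    exact hh.trans_lt (add_lt_add_right hg _)

end LeadingTerms

namespace CGLExt

variable {K : Type} [Field K] {R : Type} [Ring R] [Algebra K R] {N : ℕ}

def degreeLE (E : CGLExt K R N) (D : Subring K) (j : Fin N) (m : ℕ) : Submodule D R :=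
  E.monomialSpan D {f | SupportedBelow (j + 1) f ∧ f j ≤ m}

variable {E : CGLExt K R N} {D : Subring K}

theorem nontrivial (E : CGLExt K R N) : Nontrivial R :=
  ⟨⟨E.pbw 0, 0, E.pbw.ne_zero 0⟩⟩

theorem noZeroDivisors (hD : IsDForm D E) : NoZeroDivisors R where
  eq_zero_or_eq_zero_of_mul_eq_zero {u v} huv := by
    by_contra! h
    obtain ⟨a, F, hu⟩ := exists_isLeadingTerm (E := E) h.1
    obtain ⟨b, G, hv⟩ := exists_isLeadingTerm (E := E) h.2
    obtain ⟨q, -, huv'⟩ := hu.mul hD hv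
    exact huv'.ne_zero huv

theorem mem_DRk_of_mem_Rk (hD : IsDForm D E) {k : ℕ} {v : R} (hv : v ∈ Rk K E.x k)
    (hvD : v ∈ E.monomialSpan D Set.univ) : v ∈ DRk K D E.x k :=
  monomialSpan_le_DRk (mem_monomialSpan_of_mem_field hvD (mem_monomialSpan_of_mem_Rk hD hv))

theorem mem_monomialSpan_univ_of_mem_DRk (hD : IsDForm D E) {k : ℕ} {v : R}
    (hv : v ∈ DRk K D E.x k) : v ∈ E.monomialSpan D Set.univ :=
  monomialSpan_mono (Set.subset_univ _) ((mem_DRk_iff hD).mp hv)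

theorem mem_monomialSpan_univ_of_map_mem (φ : R →ₗ[K] R)
    (hφ : ∀ b c F, IsLeadingTerm E b c F →
      ∃ q ∈ D.toSubmonoid.units, ∃ G, IsLeadingTerm E (φ b) ((q : K) * c) G)
    (hφD : ∀ F, φ (E.pbw F) ∈ E.monomialSpan D Set.univ) {b : R}
    (hb : φ b ∈ E.monomialSpan D Set.univ) : b ∈ E.monomialSpan D Set.univ := by
  induction hn : (E.pbw.repr b).support.card generalizing b with
  | zero =>
    obtain rfl : b = 0 := by simpa using hn
    exact zero_mem _
  | succ n ih =>
    have hb0 : b ≠ 0 := by rintro rfl; simp at hn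
    obtain ⟨c, F, hcF⟩ := exists_isLeadingTerm (E := E) hb0
    obtain ⟨q, hq, G, hG⟩ := hφ b c F hcF
    have hc : c ∈ D := by
      have hqc : (q : K) * c ∈ D := hG.2.1 ▸ (mem_monomialSpan_iff.mp hb).1 G
      simpa using D.mul_mem hq.2 hqc
    have hsupp : (E.pbw.repr (b - c • E.pbw F)).support = (E.pbw.repr b).support.erase F := by
      ext h
      by_cases hhF : h = F <;> simp [hhF, hcF.2.1, eq_comm]
    rw [← sub_add_cancel b (c • E.pbw F)]
    refine add_mem (ih ?_ ?_) (smul_mem_monomialSpan hc (pbw_mem_monomialSpan trivial))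
    · rw [map_sub, map_smul]
      exact sub_mem hb (smul_mem_monomialSpan hc (hφD F))
    · rw [hsupp, Finset.card_erase_of_mem (Finsupp.mem_support_iff.mpr (hcF.2.1 ▸ hcF.1)), hn,
        Nat.add_sub_cancel]

section DegreeInX

variable {j : Fin N}

theorem mem_degreeLE_zero_iff (hD : IsDForm D E) {a : R} :
    a ∈ E.degreeLE D j 0 ↔ a ∈ DRk K D E.x j := by
  have hset : {f : Fin N → ℕ | SupportedBelow (j + 1) f ∧ f j ≤ 0} = {f | SupportedBelow j f} :=
    Set.ext fun f => ⟨fun ⟨hf, hfj⟩ => hf.of_succ (Nat.le_zero.mp hfj),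
      fun hf => ⟨hf.mono j.val.le_succ, (hf.apply_eq_zero le_rfl).le⟩⟩
  rw [degreeLE, hset, mem_DRk_iff hD]

theorem mem_DRk_of_mem_degreeLE {m : ℕ} {a : R} (ha : a ∈ E.degreeLE D j m) :
    a ∈ DRk K D E.x (j + 1) :=
  monomialSpan_le_DRk (monomialSpan_mono (fun _ hf => hf.1) ha)

theorem exists_mem_degreeLE (hD : IsDForm D E) {a : R} (ha : a ∈ DRk K D E.x (j + 1)) :
    ∃ m, a ∈ E.degreeLE D j m := by
  obtain ⟨hcoeff, hsupp⟩ := mem_monomialSpan_iff.mp ((mem_DRk_iff hD).mp ha)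
  exact ⟨(E.pbw.repr a).support.sup (· j), mem_monomialSpan_iff.mpr
    ⟨hcoeff, fun f hf => ⟨hsupp hf, Finset.le_sup (f := (· j)) hf⟩⟩⟩

theorem mul_mem_degreeLE (hD : IsDForm D E) {m n k : ℕ} (hk : m + n ≤ k) {a b : R}
    (ha : a ∈ E.degreeLE D j m) (hb : b ∈ E.degreeLE D j n) : a * b ∈ E.degreeLE D j k :=
  mul_mem_monomialSpan_of_le hD (u := {f | SupportedBelow (j + 1) f ∧ f j ≤ k})
    (fun f (hf : SupportedBelow (j + 1) f ∧ f j ≤ m) g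
    (hg : SupportedBelow (j + 1) g ∧ g j ≤ n) h (hh : toColex h ≤ toColex (f + g)) =>
    ⟨(hf.1.add hg.1).of_toColex_le hh,
      (apply_le_of_toColex_le (hf.1.add hg.1) hh).trans ((add_le_add hf.2 hg.2).trans hk)⟩) ha hb

theorem x_pow_mem_degreeLE (n : ℕ) : E.x j ^ n ∈ E.degreeLE D j n := by
  rw [x_pow_eq_pbw]
  exact pbw_mem_monomialSpan ⟨supportedBelow_single (Nat.lt_succ_self j) n, by simp⟩

theorem exists_sub_mul_x_pow_mem_degreeLE {m : ℕ} {a : R} (ha : a ∈ E.degreeLE D j (m + 1)) :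
    ∃ c ∈ DRk K D E.x j, a - c * E.x j ^ (m + 1) ∈ E.degreeLE D j m := by
  induction ha using Submodule.span_induction with
  | mem _ h =>
    obtain ⟨f, ⟨hf, hfj⟩, rfl⟩ := h
    rcases hfj.lt_or_eq with hfj | hfj
    · have : E.pbw f ∈ E.degreeLE D j m := pbw_mem_monomialSpan ⟨hf, Nat.lt_succ_iff.mp hfj⟩
      exact ⟨0, zero_mem _, by simpa using this⟩
    have hf_eq : Function.update f j 0 + Pi.single j (m + 1) = f := funext fun i => by
      by_cases hij : i = j
      · subst hij
        simp [hfj]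
      · simp [hij]
    have hf_top : ∀ i, j < i → Function.update f j 0 i = 0 := fun i hi => by
      rw [Function.update_of_ne hi.ne']
      exact hf.apply_eq_zero hi
    refine ⟨E.pbw (Function.update f j 0), pbw_mem_DRk (SupportedBelow.of_succ (fun i hi => ?_)
      (Function.update_self j 0 f)), ?_⟩
    · by_cases hij : i = j
      · exact hij ▸ Nat.lt_succ_self j
      · exact hf i (by rwa [Function.update_of_ne hij] at hi)
    · rw [x_pow_eq_pbw, ← pbw_add_of_le j hf_top fun i hi => Pi.single_eq_of_ne hi.ne _, hf_eq,
        sub_self]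
      exact zero_mem _
  | zero => exact ⟨0, zero_mem _, by simp⟩
  | add a b _ _ ha hb =>
    obtain ⟨c₁, hc₁, h₁⟩ := ha
    obtain ⟨c₂, hc₂, h₂⟩ := hb
    exact ⟨c₁ + c₂, add_mem hc₁ hc₂, by simpa [add_mul, add_sub_add_comm] using add_mem h₁ h₂⟩
  | smul d a _ ha =>
    obtain ⟨c, hc, h⟩ := ha
    refine ⟨(d : K) • c, smul_mem_DRk d.2 hc, ?_⟩
    have := Submodule.smul_mem _ d h
    rwa [smul_sub, ← smul_mul_assoc] at this

theorem x_mem_degreeLE : E.x j ∈ E.degreeLE D j 1 := by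
  simpa using x_pow_mem_degreeLE (E := E) (D := D) (j := j) 1

theorem mul_x_eq {c : R} (hc : c ∈ Rk K E.x j) :
    c * E.x j = E.x j * E.θinv j c - E.δ j (E.θinv j c) := by
  rw [E.ore j _ (E.θinv_mem j c hc), E.θ_right_inv j c hc, add_sub_cancel_right]

/-- Moving `c ∈ (R_D)_j` to the right of `x_j^(n+1)` replaces it by `θ_j^{-(n+1)}(c)`, up to
lower degree. -/
theorem exists_mul_x_pow_sub_mem_degreeLE (hD : IsDForm D E) (n : ℕ) {c : R}
    (hc : c ∈ DRk K D E.x j) :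
    ∃ c' ∈ DRk K D E.x j, c * E.x j ^ (n + 1) - E.x j ^ (n + 1) * c' ∈ E.degreeLE D j n := by
  induction n generalizing c with
  | zero =>
    have hcR := mem_Rk_of_mem_DRk hc
    refine ⟨E.θinv j c, hD.thetainv_mem j c hcR hc, ?_⟩
    rw [pow_one, mul_x_eq hcR, sub_sub_cancel_left]
    exact neg_mem ((mem_degreeLE_zero_iff hD).mpr
      (hD.delta_mem j _ (E.θinv_mem j c hcR) (hD.thetainv_mem j c hcR hc)))
  | succ n ih =>
    have hcR := mem_Rk_of_mem_DRk hc
    obtain ⟨c', hc', h⟩ := ih (hD.thetainv_mem j c hcR hc)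
    refine ⟨c', hc', ?_⟩
    have hdecomp : c * E.x j ^ (n + 1 + 1) - E.x j ^ (n + 1 + 1) * c' =
        E.x j * (E.θinv j c * E.x j ^ (n + 1) - E.x j ^ (n + 1) * c') -
          E.δ j (E.θinv j c) * E.x j ^ (n + 1) := by
      rw [pow_succ' (E.x j) (n + 1), ← mul_assoc c, mul_x_eq hcR]
      noncomm_ring
    have hδ : E.δ j (E.θinv j c) ∈ E.degreeLE D j 0 := (mem_degreeLE_zero_iff hD).mpr
      (hD.delta_mem j _ (E.θinv_mem j c hcR) (hD.thetainv_mem j c hcR hc))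
    rw [hdecomp]
    exact sub_mem (mul_mem_degreeLE hD (by omega) x_mem_degreeLE h)
      (mul_mem_degreeLE hD (by omega) hδ (x_pow_mem_degreeLE (n + 1)))

theorem exists_sub_x_pow_mul_mem_degreeLE (hD : IsDForm D E) {m : ℕ} {a : R}
    (ha : a ∈ E.degreeLE D j (m + 1)) :
    ∃ c ∈ DRk K D E.x j, a - E.x j ^ (m + 1) * c ∈ E.degreeLE D j m := by
  obtain ⟨c, hc, h⟩ := exists_sub_mul_x_pow_mem_degreeLE ha
  obtain ⟨c', hc', h'⟩ := exists_mul_x_pow_sub_mem_degreeLE hD m hc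
  exact ⟨c', hc', by simpa using add_mem h h'⟩

theorem x_pow_mul_sub_mem_degreeLE (hD : IsDForm D E) {s d : R} {μ : K} (hμ : μ ∈ D)
    (hd : d ∈ DRk K D E.x j) (hxs : E.x j * s = μ • (s * E.x j) + d) (n : ℕ) :
    E.x j ^ (n + 1) * s - μ ^ (n + 1) • (s * E.x j ^ (n + 1)) ∈ E.degreeLE D j n := by
  have hd0 : d ∈ E.degreeLE D j 0 := (mem_degreeLE_zero_iff hD).mpr hd
  induction n with
  | zero => simpa [hxs] using hd0
  | succ n ih =>
    have hdecomp : E.x j ^ (n + 1 + 1) * s - μ ^ (n + 1 + 1) • (s * E.x j ^ (n + 1 + 1)) =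
        E.x j * (E.x j ^ (n + 1) * s - μ ^ (n + 1) • (s * E.x j ^ (n + 1))) +
          μ ^ (n + 1) • (d * E.x j ^ (n + 1)) := by
      rw [mul_sub, mul_smul_comm, ← mul_assoc (E.x j) s, hxs, ← mul_assoc, ← pow_succ',
        add_mul, smul_mul_assoc, smul_add, smul_smul, ← pow_succ, mul_assoc s, ← pow_succ']
      abel
    rw [hdecomp]
    exact add_mem (mul_mem_degreeLE hD (by omega) x_mem_degreeLE ih)
      (smul_mem_monomialSpan (D.pow_mem hμ _)
        (mul_mem_degreeLE hD (by omega) hd0 (x_pow_mem_degreeLE (n + 1))))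

theorem mem_leftOreSubmonoid_DRk_succ (hD : IsDForm D E) {T : Submonoid R}
    (hT : (T : Set R) ⊆ DRk K D E.x j) {s d : R} {μ : Kˣ} (hμ : μ ∈ D.toSubmonoid.units)
    (hd : d ∈ DRk K D E.x j) (hxs : E.x j * s = (μ : K) • (s * E.x j) + d)
    (hs : s ∈ leftOreSubmonoid (DRk K D E.x j) T) :
    s ∈ leftOreSubmonoid (DRk K D E.x (j + 1)) T := by
  intro a ha
  obtain ⟨m, ham⟩ := exists_mem_degreeLE hD ha
  induction m generalizing a with
  | zero =>
    obtain ⟨b, hb, t, ht, e⟩ := hs a ((mem_degreeLE_zero_iff hD).mp ham)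
    exact ⟨b, DRk_mono j.val.le_succ hb, t, ht, e⟩
  | succ m ih =>
    obtain ⟨c, hc, hr⟩ := exists_sub_mul_x_pow_mem_degreeLE ham
    obtain ⟨b₁, hb₁, t₁, ht₁, e₁⟩ := hs c hc
    set ν : K := ((μ⁻¹ : Kˣ) : K)
    have hν : ν ^ (m + 1) ∈ D := D.pow_mem hμ.2 _
    have hνμ : ν ^ (m + 1) * (μ : K) ^ (m + 1) = 1 := by
      rw [← mul_pow, ← Units.val_mul, inv_mul_cancel, Units.val_one, one_pow]
    set w := ν ^ (m + 1) • (b₁ * E.x j ^ (m + 1))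
    set r := t₁ * (a - c * E.x j ^ (m + 1)) - ν ^ (m + 1) • (b₁ *
      (E.x j ^ (m + 1) * s - (μ : K) ^ (m + 1) • (s * E.x j ^ (m + 1))))
    have hr' : r ∈ E.degreeLE D j m :=
      sub_mem (mul_mem_degreeLE hD (by omega) ((mem_degreeLE_zero_iff hD).mpr (hT ht₁)) hr)
        (smul_mem_monomialSpan hν (mul_mem_degreeLE hD (by omega)
          ((mem_degreeLE_zero_iff hD).mpr hb₁) (x_pow_mul_sub_mem_degreeLE hD hμ.1 hd hxs m)))
    have key : t₁ * a = w * s + r := by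
      simp only [r, w, mul_sub, smul_sub, mul_smul_comm, smul_smul, hνμ, one_smul, smul_mul_assoc,
        ← mul_assoc, e₁]
      abel
    obtain ⟨b₂, hb₂, t₂, ht₂, e₂⟩ := ih r (mem_DRk_of_mem_degreeLE hr') hr'
    refine ⟨t₂ * w + b₂, add_mem (mul_mem (DRk_mono j.val.le_succ (hT ht₂)) ?_) hb₂, t₂ * t₁,
      mul_mem ht₂ ht₁, by rw [mul_assoc, key, mul_add, e₂, ← mul_assoc, add_mul]⟩
    exact smul_mem_DRk hν (mul_mem (DRk_mono j.val.le_succ hb₁)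
      (pow_mem (x_mem_DRk (Nat.lt_succ_self j)) _))

theorem mem_rightOreSubmonoid_DRk_succ (hD : IsDForm D E) {T : Submonoid R}
    (hT : (T : Set R) ⊆ DRk K D E.x j) {s d : R} {μ : Kˣ} (hμ : μ ∈ D.toSubmonoid.units)
    (hd : d ∈ DRk K D E.x j) (hxs : E.x j * s = (μ : K) • (s * E.x j) + d)
    (hs : s ∈ rightOreSubmonoid (DRk K D E.x j) T) :
    s ∈ rightOreSubmonoid (DRk K D E.x (j + 1)) T := by
  intro a ha
  obtain ⟨m, ham⟩ := exists_mem_degreeLE hD ha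
  induction m generalizing a with
  | zero =>
    obtain ⟨b, hb, t, ht, e⟩ := hs a ((mem_degreeLE_zero_iff hD).mp ham)
    exact ⟨b, DRk_mono j.val.le_succ hb, t, ht, e⟩
  | succ m ih =>
    obtain ⟨c, hc, hr⟩ := exists_sub_x_pow_mul_mem_degreeLE hD ham
    obtain ⟨b₁, hb₁, t₁, ht₁, e₁⟩ := hs c hc
    set w := (μ : K) ^ (m + 1) • (E.x j ^ (m + 1) * b₁)
    set r := (a - E.x j ^ (m + 1) * c) * t₁ +
      (E.x j ^ (m + 1) * s - (μ : K) ^ (m + 1) • (s * E.x j ^ (m + 1))) * b₁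
    have hr' : r ∈ E.degreeLE D j m :=
      add_mem (mul_mem_degreeLE hD (by omega) hr ((mem_degreeLE_zero_iff hD).mpr (hT ht₁)))
        (mul_mem_degreeLE hD (by omega) (x_pow_mul_sub_mem_degreeLE hD hμ.1 hd hxs m)
          ((mem_degreeLE_zero_iff hD).mpr hb₁))
    have key : a * t₁ = s * w + r := by
      simp only [r, w, sub_mul, mul_smul_comm, smul_mul_assoc, mul_assoc, e₁]
      abel
    obtain ⟨b₂, hb₂, t₂, ht₂, e₂⟩ := ih r (mem_DRk_of_mem_degreeLE hr') hr'
    refine ⟨w * t₂ + b₂, add_mem (mul_mem ?_ (DRk_mono j.val.le_succ (hT ht₂))) hb₂, t₁ * t₂,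
      mul_mem ht₁ ht₂, by rw [← mul_assoc, key, add_mul, e₂, mul_add, mul_assoc]⟩
    exact smul_mem_DRk (D.pow_mem hμ.1 _) (mul_mem (pow_mem (x_mem_DRk (Nat.lt_succ_self j)) _)
      (DRk_mono j.val.le_succ hb₁))

end DegreeInX

end CGLExt

namespace YSystem

open CGLExt

variable {K : Type} [Field K] {R : Type} [Ring R] [Algebra K R] {N : ℕ} {E : CGLExt K R N}
  {D : Subring K} (Y : YSystem E)

theorem isPrimeElemIn (k : Fin N) : IsPrimeElemIn (Rk K E.x (k + 1)) (Y.y k) :=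
  Y.y_prime k k le_rfl fun _ hl => by
    have := Finset.mem_of_min hl
    simp only [Finset.mem_filter] at this
    exact this.2.1

theorem y_ne_zero (k : Fin N) : Y.y k ≠ 0 := (Y.isPrimeElemIn k).1

theorem y_mem_Rk (k : Fin N) : Y.y k ∈ Rk K E.x (k + 1) := (Y.isPrimeElemIn k).2.1

theorem exists_isLeadingTerm_one (hD : IsDForm D E) (k : Fin N) :
    ∃ F, IsLeadingTerm E (Y.y k) 1 F := by
  induction hk : (k : ℕ) using Nat.strong_induction_on generalizing k with
  | _ n ih =>
  subst hk
  rcases hpred : predIdx Y.η k with _ | j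
  · exact ⟨Pi.single k 1, by rw [Y.y_base k hpred, x_eq_pbw]; exact isLeadingTerm_pbw _⟩
  have hjk : j < k := by
    have := Finset.mem_of_max hpred
    simp only [Finset.mem_filter] at this
    exact this.2.1
  obtain ⟨Fj, hFj⟩ := ih j hjk j rfl
  have hFj_below : SupportedBelow k Fj := by
    refine fun i hi => lt_of_lt_of_le (b := (j : ℕ) + 1) ?_ hjk
    refine mem_monomialSpan_field_iff.mp (mem_monomialSpan_of_mem_Rk hD (Y.y_mem_Rk j)) ?_ i hi
    simp [hFj.2.1]
  have hx : E.pbw (Fj + Pi.single k 1) = E.pbw Fj * E.x k := by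
    rw [x_eq_pbw, pbw_add_of_le k (fun i hi => hFj_below.apply_eq_zero hi.le)
      fun i hi => Pi.single_eq_of_ne hi.ne 1]
  refine ⟨Fj + Pi.single k 1, isLeadingTerm_iff.mpr ⟨one_ne_zero, ?_⟩⟩
  have hdecomp : Y.y k - (1 : K) • E.pbw (Fj + Pi.single k 1) =
      (Y.y j - (1 : K) • E.pbw Fj) * E.x k - Y.c k := by
    rw [Y.y_rec k j hpred, hx, one_smul, one_smul, sub_mul]
    abel
  rw [hdecomp]
  refine sub_mem ?_ ?_
  · refine mul_mem_monomialSpan_field_of_le hD (fun f (hf : toColex f < toColex Fj) g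
      (hg : g = Pi.single k 1) h (hh : toColex h ≤ toColex (f + g)) => ?_)
      (isLeadingTerm_iff.mp hFj).2 (by rw [x_eq_pbw]; exact pbw_mem_monomialSpan rfl)
    subst hg
    exact hh.trans_lt (add_lt_add_left hf _)
  · refine monomialSpan_mono (fun h (hh : SupportedBelow k h) => toColex_lt_of_apply_lt k ?_ ?_)
      (mem_monomialSpan_of_mem_Rk hD (Y.c_mem k))
    · simp [hh.apply_eq_zero le_rfl]
    · intro i hi
      simp [hh.apply_eq_zero hi.le, hFj_below.apply_eq_zero hi.le, Pi.single_eq_of_ne hi.ne']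

theorem y_mem_monomialSpan_univ (hD : IsDForm D E) {k : Fin N}
    (hy : Y.y k ∈ DRfull K D E.x) : Y.y k ∈ E.monomialSpan D Set.univ :=
  mem_monomialSpan_univ_of_mem_DRk hD (DRfull_eq_DRk (E := E) ▸ hy)

theorem y_mem_DRk (hD : IsDForm D E) {k : Fin N} (hy : Y.y k ∈ DRfull K D E.x) :
    Y.y k ∈ DRk K D E.x (k + 1) :=
  mem_DRk_of_mem_Rk hD (Y.y_mem_Rk k) (Y.y_mem_monomialSpan_univ hD hy)

theorem mem_monomialSpan_univ_of_mul_y_mem (hD : IsDForm D E) {k : Fin N}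
    (hy : Y.y k ∈ DRfull K D E.x) {b : R} (h : b * Y.y k ∈ E.monomialSpan D Set.univ) :
    b ∈ E.monomialSpan D Set.univ := by
  obtain ⟨Fy, hFy⟩ := Y.exists_isLeadingTerm_one hD k
  refine mem_monomialSpan_univ_of_map_mem (LinearMap.mulRight K (Y.y k)) (fun b c F hb => ?_)
    (fun F => ?_) h
  · obtain ⟨q, hq, h⟩ := hb.mul hD hFy
    exact ⟨q, hq, _, by simpa using h⟩
  · exact mul_mem_monomialSpan_of_le hD (fun _ _ _ _ _ _ => trivial)
      (pbw_mem_monomialSpan (Set.mem_univ F)) (Y.y_mem_monomialSpan_univ hD hy)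

theorem mem_monomialSpan_univ_of_y_mul_mem (hD : IsDForm D E) {k : Fin N}
    (hy : Y.y k ∈ DRfull K D E.x) {b : R} (h : Y.y k * b ∈ E.monomialSpan D Set.univ) :
    b ∈ E.monomialSpan D Set.univ := by
  obtain ⟨Fy, hFy⟩ := Y.exists_isLeadingTerm_one hD k
  refine mem_monomialSpan_univ_of_map_mem (LinearMap.mulLeft K (Y.y k)) (fun b c F hb => ?_)
    (fun F => ?_) h
  · obtain ⟨q, hq, h⟩ := hFy.mul hD hb
    exact ⟨q, hq, _, by simpa using h⟩
  · exact mul_mem_monomialSpan_of_le hD (fun _ _ _ _ _ _ => trivial)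
      (Y.y_mem_monomialSpan_univ hD hy) (pbw_mem_monomialSpan (Set.mem_univ F))

/-- The cofactors given by normality in `R_{k+1}` have coefficients in `D` because `y_k` has
leading coefficient `1`. -/
theorem isNormalInSR_y (hD : IsDForm D E) {k : Fin N} (hy : Y.y k ∈ DRfull K D E.x) :
    IsNormalInSR (DRk K D E.x (k + 1)) (Y.y k) := by
  have hyD := Y.y_mem_monomialSpan_univ hD hy
  have hmul : ∀ {a b : R}, a ∈ E.monomialSpan D Set.univ → b ∈ E.monomialSpan D Set.univ →
      a * b ∈ E.monomialSpan D Set.univ :=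
    mul_mem_monomialSpan_of_le hD fun _ _ _ _ _ _ => trivial
  constructor
  · intro a ha
    obtain ⟨b, hb, hab⟩ := (Y.isPrimeElemIn k).2.2.1.1 a (mem_Rk_of_mem_DRk ha)
    refine ⟨b, mem_DRk_of_mem_Rk hD hb (Y.mem_monomialSpan_univ_of_mul_y_mem hD hy ?_), hab⟩
    rw [← hab]
    exact hmul hyD (mem_monomialSpan_univ_of_mem_DRk hD ha)
  · intro a ha
    obtain ⟨b, hb, hab⟩ := (Y.isPrimeElemIn k).2.2.1.2 a (mem_Rk_of_mem_DRk ha)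
    refine ⟨b, mem_DRk_of_mem_Rk hD hb (Y.mem_monomialSpan_univ_of_y_mul_mem hD hy ?_), hab⟩
    rw [← hab]
    exact hmul (mem_monomialSpan_univ_of_mem_DRk hD ha) hyD

/-- `μ` is the eigenvalue of `θ_j` on the homogeneous element `y_i`. -/
theorem exists_x_mul_y (hD : IsDForm D E) {i j : Fin N} (hy : Y.y i ∈ DRfull K D E.x)
    (hij : i < j) :
    ∃ μ ∈ D.toSubmonoid.units, E.x j * Y.y i = (μ : K) • (Y.y i * E.x j) + E.δ j (Y.y i) := by
  have hyj : Y.y i ∈ DRk K D E.x j := DRk_mono (Nat.succ_le_of_lt hij) (Y.y_mem_DRk hD hy)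
  have hyR := mem_Rk_of_mem_DRk hyj
  obtain ⟨χ, hχ⟩ := Y.y_homog i
  have hθ : E.θ j (Y.y i) = (charEval (E.hElt j) χ : K) • Y.y i := by
    rw [← E.hElt_theta j _ hyR]; exact hχ _
  obtain ⟨F, hF⟩ := Y.exists_isLeadingTerm_one hD i
  refine ⟨_, eigenvalue_mem_units hD (fun _ hv => (mem_DRk_iff hD).mp hv) hyj hF.2.1 hθ, ?_⟩
  rw [E.ore j _ hyR, hθ, smul_mul_assoc]

def denomMonoid (D : Subring K) (I : Set (Fin N)) (j : ℕ) : Submonoid R :=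
  Submonoid.closure ({r | ∃ t : K, isUnitIn K D t ∧ r = algebraMap K R t} ∪
    {r | ∃ i ∈ I, (i : ℕ) < j ∧ r = Y.y i})

variable {Y}

theorem denomMonoid_mono {I : Set (Fin N)} {j j' : ℕ} (h : j ≤ j') :
    Y.denomMonoid D I j ≤ Y.denomMonoid D I j' :=
  Submonoid.closure_mono (Set.union_subset_union_right _
    fun _ ⟨i, hi, hij, hr⟩ => ⟨i, hi, hij.trans_le h, hr⟩)

theorem denomMonoid_le_DRk (hD : IsDForm D E) (hy : ∀ k, Y.y k ∈ DRfull K D E.x)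
    (I : Set (Fin N)) (j : ℕ) : (Y.denomMonoid D I j : Set R) ⊆ DRk K D E.x j :=
  (Submonoid.closure_le (S := (DRk K D E.x j).toSubmonoid)).mpr (by
    rintro _ (⟨c, hc, rfl⟩ | ⟨i, -, hij, rfl⟩)
    exacts [algebraMap_mem_DRk j hc.1, DRk_mono hij (Y.y_mem_DRk hD (hy i))])

theorem zero_notMem_denomMonoid (hD : IsDForm D E) (I : Set (Fin N)) (j : ℕ) :
    (0 : R) ∉ Y.denomMonoid D I j := by
  have := E.nontrivial
  have := noZeroDivisors hD
  refine fun h => zero_notMem_nonZeroDivisors (Submonoid.closure_le.mpr ?_ h)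
  rintro _ (⟨c, hc, rfl⟩ | ⟨i, -, -, rfl⟩) <;> refine mem_nonZeroDivisors_of_ne_zero ?_
  exacts [(map_ne_zero _).mpr hc.2.1, Y.y_ne_zero i]

theorem y_mem_ore (hD : IsDForm D E) (hy : ∀ k, Y.y k ∈ DRfull K D E.x) (I : Set (Fin N))
    (j : ℕ) (hj : j ≤ N) {i : Fin N} (hiI : i ∈ I) (hij : (i : ℕ) < j) :
    Y.y i ∈ leftOreSubmonoid (DRk K D E.x j) (Y.denomMonoid D I j) ⊓
      rightOreSubmonoid (DRk K D E.x j) (Y.denomMonoid D I j) := by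
  induction j generalizing i with
  | zero => exact absurd hij (Nat.not_lt_zero _)
  | succ j ih =>
    obtain ⟨jF, rfl⟩ : ∃ jF : Fin N, (jF : ℕ) = j := ⟨⟨j, hj⟩, rfl⟩
    have hmem : Y.y i ∈ Y.denomMonoid D I (jF + 1) :=
      Submonoid.subset_closure (Or.inr ⟨i, hiI, hij, rfl⟩)
    rcases (Nat.lt_succ_iff.mp hij).lt_or_eq with hij | hij
    · have hT := denomMonoid_le_DRk hD hy I jF
      have hmono := denomMonoid_mono (Y := Y) (D := D) (I := I) (jF : ℕ).le_succ
      obtain ⟨μ, hμ, hxy⟩ := Y.exists_x_mul_y hD (hy i) (show i < jF from hij)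
      have hyj : Y.y i ∈ DRk K D E.x jF := DRk_mono hij (Y.y_mem_DRk hD (hy i))
      have hd := hD.delta_mem jF _ (mem_Rk_of_mem_DRk hyj) hyj
      obtain ⟨hl, hr⟩ := ih (by omega) hiI hij
      exact ⟨leftOreSubmonoid_mono hmono (mem_leftOreSubmonoid_DRk_succ hD hT hμ hd hxy hl),
        rightOreSubmonoid_mono hmono (mem_rightOreSubmonoid_DRk_succ hD hT hμ hd hxy hr)⟩
    · obtain rfl : i = jF := Fin.ext hij
      exact ⟨mem_leftOreSubmonoid_of_isNormalInSR hmem (Y.isNormalInSR_y hD (hy i)),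
        mem_rightOreSubmonoid_of_isNormalInSR hmem (Y.isNormalInSR_y hD (hy i))⟩

theorem denomMonoid_le_ore (hD : IsDForm D E) (hy : ∀ k, Y.y k ∈ DRfull K D E.x)
    (I : Set (Fin N)) (j : ℕ) (hj : j ≤ N) :
    Y.denomMonoid D I j ≤ leftOreSubmonoid (DRk K D E.x j) (Y.denomMonoid D I j) ⊓
      rightOreSubmonoid (DRk K D E.x j) (Y.denomMonoid D I j) := by
  refine Submonoid.closure_le.mpr ?_
  rintro _ (⟨c, hc, rfl⟩ | ⟨i, hiI, hij, rfl⟩)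
  · have hmem : algebraMap K R c ∈ Y.denomMonoid D I j :=
      Submonoid.subset_closure (Or.inl ⟨c, hc, rfl⟩)
    have hn : IsNormalInSR (DRk K D E.x j) (algebraMap K R c) :=
      isNormalInSR_of_commute (Algebra.commutes c)
    exact ⟨mem_leftOreSubmonoid_of_isNormalInSR hmem hn,
      mem_rightOreSubmonoid_of_isNormalInSR hmem hn⟩
  · exact y_mem_ore hD hy I j hj hiI hij

end YSystem

/-- **Lemma (normality of the `y_k` and Ore sets).** Let `R` be a CGL extension whose
presentation has a `D`-form `R_D = D⟨x_1,…,x_N⟩` containing the homogeneous prime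
elements `y_1,…,y_N`. Then (a) each `y_k` is a normal element of
`(R_D)_k = D⟨x_1,…,x_k⟩`, and (b) for any subset `I ⊆ [1,N]` the multiplicative set
generated by `D^× ∪ {y_i : i ∈ I}` is a denominator set in `R_D`. -/
theorem y_normal_and_denom {K : Type} [Field K] {R : Type} [Ring R] [Algebra K R] {N : ℕ}
    (E : CGLExt K R N) (D : Subring K) (hD : IsDForm D E)
    (Y : YSystem E) (hy : ∀ k : Fin N, Y.y k ∈ DRfull K D E.x) :
    (∀ k : Fin N, IsNormalInSR (DRk K D E.x ((k : ℕ) + 1)) (Y.y k)) ∧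
    (∀ I : Set (Fin N),
      IsDenomSetIn (DRfull K D E.x)
        (Submonoid.closure
          ({r : R | ∃ t : K, isUnitIn K D t ∧ r = algebraMap K R t} ∪
            {r : R | ∃ i ∈ I, r = Y.y i}))) := by
  refine ⟨fun k => Y.isNormalInSR_y hD (hy k), fun I => ?_⟩
  have hT : Submonoid.closure ({r : R | ∃ t : K, isUnitIn K D t ∧ r = algebraMap K R t} ∪
      {r : R | ∃ i ∈ I, r = Y.y i}) = Y.denomMonoid D I N := by
    simp only [YSystem.denomMonoid, Fin.is_lt, true_and]
  rw [hT, CGLExt.DRfull_eq_DRk]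
  have hOre := YSystem.denomMonoid_le_ore hD hy I N le_rfl
  exact ⟨YSystem.denomMonoid_le_DRk hD hy I N, YSystem.zero_notMem_denomMonoid hD I N,
    fun a ha _ hs => (hOre hs).1 a ha, fun a ha _ hs => (hOre hs).2 a ha⟩

end GYint
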